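/- arXiv:1012.3182 — 7 statements merged into one kernel-verified Lean document; each statement's English description precedes it below -/
import Mathlib

section
/- Let L ⊂ ℤⁿ be a k-dimensional lattice (a discrete subgroup of ℤⁿ of rank k). Then the k-th successive minimum of the unit Euclidean ball with respect to L satisfies λ_k(B, L) ≤ √n · det(L). -/
noncomputable section

open scoped BigOperators RealInnerProductSpace Pointwise

instance (k : ℕ) : WellFoundedLT (Fin k) := inferInstance

/-- Pack a plain vector into `EuclideanSpace`. -/
def toE {n : ℕ} (x : Fin n → ℝ) : EuclideanSpace ℝ (Fin n) := (WithLp.equiv 2 _).symm x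

/-- `det(L)` for the lattice with basis `b`: the square root of the Gram determinant,
i.e. the `k`-volume of the fundamental parallelepiped. -/
def latticeDet {n k : ℕ} (b : Fin k → EuclideanSpace ℝ (Fin n)) : ℝ :=
  Real.sqrt (Matrix.det (Matrix.of fun i j : Fin k => (⟪b i, b j⟫ : ℝ)))

/-- `λ_i(B, L)`: the `i`-th successive minimum (1-based) of the unit Euclidean ball with
respect to the lattice generated over `ℤ` by `b`. -/
def succMin {n k : ℕ} (b : Fin k → EuclideanSpace ℝ (Fin n)) (i : ℕ) : ℝ :=
  sInf {lam : ℝ | 0 < lam ∧ ∃ v : Fin i → EuclideanSpace ℝ (Fin n),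
    (∀ j, v j ∈ Submodule.span ℤ (Set.range b)) ∧ LinearIndependent ℝ v ∧ ∀ j, ‖v j‖ ≤ lam}

/-- `λ_i(K, L)` for a general `0`-symmetric convex body `K`. -/
def succMinSet {n k : ℕ} (K : Set (EuclideanSpace ℝ (Fin n)))
    (b : Fin k → EuclideanSpace ℝ (Fin n)) (i : ℕ) : ℝ :=
  sInf {lam : ℝ | 0 < lam ∧ ∃ v : Fin i → EuclideanSpace ℝ (Fin n),
    (∀ j, v j ∈ Submodule.span ℤ (Set.range b)) ∧ LinearIndependent ℝ v ∧ ∀ j, v j ∈ lam • K}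

/-- Gram–Schmidt coefficients `μ_{ij} = ⟪b_i, b̂_j⟫ / ‖b̂_j‖²`. -/
def gsMu {n k : ℕ} (b : Fin k → EuclideanSpace ℝ (Fin n)) (i j : Fin k) : ℝ :=
  ⟪b i, InnerProductSpace.gramSchmidt ℝ b j⟫ / ‖InnerProductSpace.gramSchmidt ℝ b j‖ ^ 2

/-- A basis is LLL-reduced if it is size-reduced and satisfies the Lovász condition. -/
def IsLLLReduced {n k : ℕ} (b : Fin k → EuclideanSpace ℝ (Fin n)) : Prop :=
  (∀ i j : Fin k, j < i → |gsMu b i j| ≤ 1 / 2) ∧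
  (∀ i j : Fin k, (j : ℕ) + 1 = (i : ℕ) →
    3 / 4 * ‖InnerProductSpace.gramSchmidt ℝ b j‖ ^ 2 ≤
      ‖InnerProductSpace.gramSchmidt ℝ b i‖ ^ 2 + gsMu b i j ^ 2 * ‖InnerProductSpace.gramSchmidt ℝ b j‖ ^ 2)

/-- The Hermite constant `γ_k`: the supremum over full-rank lattices in `ℝ^k` of
`λ₁(B,L)² / (det L)^{2/k}`. -/
def hermiteConstant (k : ℕ) : ℝ :=
  sSup {r : ℝ | ∃ b : Fin k → EuclideanSpace ℝ (Fin k), LinearIndependent ℝ b ∧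
    r = succMin b 1 ^ 2 / latticeDet b ^ ((2 : ℝ) / k)}

/-- `x ∈ ℤⁿ`. -/
def IsIntegerVec {n : ℕ} (x : EuclideanSpace ℝ (Fin n)) : Prop :=
  ∀ j, ∃ z : ℤ, x j = (z : ℝ)

/-- The greatest common divisor of all `m × m` minors of an `m × n` integer matrix. -/
def minorGcd {m n : ℕ} (A : Matrix (Fin m) (Fin n) ℤ) : ℤ :=
  Finset.gcd (Finset.univ.filter fun s : Finset (Fin n) => s.card = m)
    fun s => if h : s.card = m then
      (A.submatrix id fun j => ((s.orderIsoOfFin h) j : Fin n)).det else 0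

/-- `c` is a `ℤ`-basis of the lattice `L_A^⊥ = {x ∈ ℤⁿ : A x = 0}`. -/
def IsKernelZBasis {m n k : ℕ} (A : Matrix (Fin m) (Fin n) ℤ)
    (c : Fin k → EuclideanSpace ℝ (Fin n)) : Prop :=
  LinearIndependent ℝ c ∧ (∀ i, IsIntegerVec (c i)) ∧
  (∀ i, (A.map (Int.cast : ℤ → ℝ)).mulVec (fun j => c i j) = 0) ∧
  (∀ x : Fin n → ℤ, A.mulVec x = 0 →
    toE (fun j => (x j : ℝ)) ∈ Submodule.span ℤ (Set.range c))

/-- The cone `C` generated by the columns of `A`. -/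
def colCone {m n : ℕ} (A : Matrix (Fin m) (Fin n) ℤ) : Set (Fin m → ℝ) :=
  {y | ∃ μ : Fin n → ℝ, (∀ i, 0 ≤ μ i) ∧ y = ∑ i, μ i • fun r => (A r i : ℝ)}

/-- `v = v₁ + ⋯ + v_n`, the sum of the columns of `A` (as a real vector). -/
def colSum {m n : ℕ} (A : Matrix (Fin m) (Fin n) ℤ) : Fin m → ℝ :=
  fun r => ∑ i, (A r i : ℝ)

/-!
Pick `k` coordinates on which the coordinate matrix `B` of the basis (columns `b q`) has an
invertible `k × k` minor `N`, and put `w i = ∑ q, adj(N) q i • b q`. As `N` is an integer matrix,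
so is `adj N`, hence the `w i` lie in the lattice; they are linearly independent because `adj N`
is invertible. By Cramer's rule every coordinate of `w i` is again a `k × k` minor `det D` of `B`,
and `(det D)² ≤ det (Bᵀ B) = det(L)²` because `Bᵀ B = Dᵀ D + Fᵀ F`, where `F` collects the other
rows. Hence `‖w i‖ ≤ √n · det(L)`.
-/

open Matrix

namespace Matrix

variable {m k : Type*} [Fintype k] [DecidableEq k]

theorem one_le_det_one_add {C : Matrix k k ℝ} (hC : C.PosSemidef) : 1 ≤ (1 + C).det := by
  have hM : (1 + C).IsHermitian := isHermitian_one.add hC.1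
  have hone_le : ∀ i, 1 ≤ hM.eigenvalues i := by
    intro i
    set v : k → ℝ := ⇑(hM.eigenvectorBasis i)
    have hv0 : v ≠ 0 := fun h =>
      hM.eigenvectorBasis.orthonormal.ne_zero i (by ext j; exact congrFun h j)
    have hCv : C *ᵥ v = (hM.eigenvalues i - 1) • v := by
      have := hM.mulVec_eigenvectorBasis i
      rw [add_mulVec, one_mulVec] at this
      rw [sub_smul, one_smul, ← this]
      abel
    have hquad := hC.dotProduct_mulVec_nonneg v
    have hpos : 0 < v ⬝ᵥ v := by simpa using dotProduct_star_self_pos_iff.2 hv0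
    rw [hCv, star_trivial, dotProduct_smul, smul_eq_mul] at hquad
    nlinarith
  rw [hM.det_eq_prod_eigenvalues]
  simpa using Finset.prod_le_prod (fun _ _ => zero_le_one) fun i _ => hone_le i

theorem sq_det_le_det_transpose_mul_self_add [Fintype m] (D : Matrix k k ℝ) (F : Matrix m k ℝ) :
    D.det ^ 2 ≤ (Dᵀ * D + Fᵀ * F).det := by
  by_cases hD : IsUnit D.det
  · set C := F * D⁻¹
    have hfactor : Dᵀ * D + Fᵀ * F = Dᵀ * (1 + Cᵀ * C) * D := by
      have hDt : IsUnit Dᵀ.det := by rwa [det_transpose]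
      simp only [C, transpose_mul, transpose_nonsing_inv, Matrix.mul_add, Matrix.add_mul,
        Matrix.mul_one, Matrix.mul_assoc, nonsing_inv_mul _ hD, mul_nonsing_inv_cancel_left _ _ hDt]
    have hC : 1 ≤ (1 + Cᵀ * C).det := one_le_det_one_add (posSemidef_conjTranspose_mul_self C)
    rw [hfactor, det_mul, det_mul, det_transpose]
    nlinarith [mul_le_mul_of_nonneg_left hC (sq_nonneg D.det)]
  · rw [isUnit_iff_ne_zero, not_not] at hD
    rw [hD]
    simpa using ((posSemidef_conjTranspose_mul_self D).add
      (posSemidef_conjTranspose_mul_self F)).det_nonneg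

theorem sq_det_submatrix_le_det_transpose_mul_self [Fintype m] (B : Matrix m k ℝ) (g : k → m) :
    (B.submatrix g id).det ^ 2 ≤ (Bᵀ * B).det := by
  classical
  by_cases hg : g.Injective
  · let e : k ⊕ {j // j ∉ Set.range g} ≃ m :=
      (Equiv.sumCongr (Equiv.ofInjective g hg) (Equiv.refl _)).trans (Equiv.sumCompl _)
    set F := B.submatrix (Subtype.val : {j // j ∉ Set.range g} → m) id
    have hsplit : B.submatrix e id = fromRows (B.submatrix g id) F := by
      ext (i | i) j <;> rfl
    have hgram : Bᵀ * B = (B.submatrix g id)ᵀ * B.submatrix g id + Fᵀ * F := by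
      rw [← fromCols_mul_fromRows, ← transpose_fromRows, ← hsplit, transpose_submatrix,
        submatrix_mul_equiv, submatrix_id_id]
    rw [hgram]
    exact sq_det_le_det_transpose_mul_self_add _ _
  · obtain ⟨i, j, hij, hne⟩ : ∃ i j, g i = g j ∧ i ≠ j := by
      simpa [Function.Injective] using hg
    rw [det_zero_of_row_eq hne (by ext; simp [hij])]
    simpa using (posSemidef_conjTranspose_mul_self B).det_nonneg

theorem exists_isUnit_det_submatrix_of_linearIndependent_col [Fintype m] {K : Type*} [Field K]
    {B : Matrix m k K} (hB : LinearIndependent K B.col) :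
    ∃ s : k → m, IsUnit (B.submatrix s id).det := by
  have hrow : Submodule.span K (Set.range B.row) = ⊤ := by
    apply Submodule.eq_top_of_finrank_eq
    rw [← rank_eq_finrank_span_row, rank_eq_finrank_span_cols, finrank_span_eq_card hB,
      Module.finrank_fintype_fun_eq_card]
  obtain ⟨κ, a, -, hspan, hli⟩ := exists_linearIndependent' K B.row
  let e := (Module.Basis.mk hli (by rw [hspan, hrow])).indexEquiv (Pi.basisFun K k)
  refine ⟨a ∘ e.symm, ?_⟩
  rw [← isUnit_iff_isUnit_det, ← linearIndependent_rows_iff_isUnit]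
  exact hli.comp e.symm e.symm.injective

theorem mul_adjugate_submatrix_apply {R : Type*} [CommRing R] (B : Matrix m k R) (s : k → m)
    (j : m) (i : k) :
    (B * (B.submatrix s id).adjugate) j i = (B.submatrix (Function.update s i j) id).det := by
  have hrow : (B.submatrix s id).updateRow i (B j) = B.submatrix (Function.update s i j) id := by
    ext p q
    rcases eq_or_ne p i with rfl | hp <;> simp [*]
  rw [← hrow, ← cramer_transpose_apply, cramer_eq_adjugate_mulVec, ← adjugate_transpose,
    mulVec_transpose]
  rfl

end Matrix

theorem LinearIndependent.sum_smul_of_isUnit {K V ι : Type*} [Field K] [AddCommGroup V]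
    [Module K V] [Fintype ι] [DecidableEq ι] {b : ι → V} (hb : LinearIndependent K b)
    {M : Matrix ι ι K} (hM : IsUnit M) : LinearIndependent K fun i => ∑ q, M q i • b q := by
  have hker : LinearMap.ker (Fintype.linearCombination K b) = ⊥ :=
    LinearMap.ker_eq_bot.2 hb.fintypeLinearCombination_injective
  simpa [Function.comp_def, Fintype.linearCombination_apply] using
    (linearIndependent_cols_iff_isUnit.2 hM).map' _ hker

theorem EuclideanSpace.norm_le_sqrt_card_mul_of_sq_le {ι : Type*} [Fintype ι]
    {x : EuclideanSpace ℝ ι} {c : ℝ} (hx : ∀ j, x j ^ 2 ≤ c) :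
    ‖x‖ ≤ √(Fintype.card ι * c) := by
  rw [EuclideanSpace.norm_eq]
  gcongr
  simpa using Finset.sum_le_sum fun j (_ : j ∈ Finset.univ) => hx j

section coordMatrix

variable {ι κ : Type*}

def coordMatrix (b : κ → EuclideanSpace ℝ ι) : Matrix ι κ ℝ := Matrix.of fun j q => b q j

theorem coordMatrix_mul_apply [Fintype κ] (b : κ → EuclideanSpace ℝ ι) (M : Matrix κ κ ℝ)
    (j : ι) (i : κ) : (coordMatrix b * M) j i = (∑ q, M q i • b q) j := by
  simp [coordMatrix, mul_apply, mul_comm]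

theorem linearIndependent_col_coordMatrix {b : κ → EuclideanSpace ℝ ι}
    (hb : LinearIndependent ℝ b) : LinearIndependent ℝ (coordMatrix b).col :=
  hb.map' (WithLp.linearEquiv 2 ℝ (ι → ℝ)).toLinearMap (LinearEquiv.ker _)

theorem transpose_coordMatrix_mul_self [Fintype ι] [Fintype κ]
    (b : κ → EuclideanSpace ℝ ι) :
    (coordMatrix b)ᵀ * coordMatrix b = Matrix.of fun p q => ⟪b p, b q⟫ := by
  ext p q
  simp [coordMatrix, mul_apply, PiLp.inner_apply, mul_comm]

end coordMatrix

theorem latticeDet_eq_sqrt_det {n k : ℕ} (b : Fin k → EuclideanSpace ℝ (Fin n)) :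
    latticeDet b = √((coordMatrix b)ᵀ * coordMatrix b).det := by
  rw [latticeDet, transpose_coordMatrix_mul_self]

theorem succMin_le_of_norm_le {n k i : ℕ} {b : Fin k → EuclideanSpace ℝ (Fin n)} {r : ℝ}
    (hr : 0 ≤ r) (v : Fin i → EuclideanSpace ℝ (Fin n))
    (hv : ∀ j, v j ∈ Submodule.span ℤ (Set.range b))
    (hli : LinearIndependent ℝ v) (hnorm : ∀ j, ‖v j‖ ≤ r) : succMin b i ≤ r := by
  refine le_of_forall_pos_le_add fun ε hε => csInf_le ⟨0, fun _ h => h.1.le⟩ ?_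
  exact ⟨by positivity, v, hv, hli, fun j => (hnorm j).trans (by linarith)⟩

theorem exists_intMatrix_map_eq_coordMatrix {n k : ℕ} {b : Fin k → EuclideanSpace ℝ (Fin n)}
    (hint : ∀ i, IsIntegerVec (b i)) :
    ∃ Z : Matrix (Fin n) (Fin k) ℤ, Z.map (↑) = coordMatrix b := by
  choose z hz using hint
  exact ⟨Matrix.of fun j q => z q j, by ext j q; simp [coordMatrix, hz]⟩

/-- Lemma 4: for a `k`-dimensional lattice `L ⊂ ℤⁿ`,
`λ_k(B, L) ≤ √n · det(L)`. -/
theorem succMin_last_le_sqrt_mul_det {n k : ℕ} (b : Fin k → EuclideanSpace ℝ (Fin n))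
    (hb : LinearIndependent ℝ b) (hint : ∀ i, IsIntegerVec (b i)) :
    succMin b k ≤ Real.sqrt n * latticeDet b := by
  obtain ⟨Z, hZ⟩ := exists_intMatrix_map_eq_coordMatrix hint
  obtain ⟨s, hs⟩ := exists_isUnit_det_submatrix_of_linearIndependent_col
    (linearIndependent_col_coordMatrix hb)
  set M := ((coordMatrix b).submatrix s id).adjugate with hM_def
  have hMZ : M = (Z.submatrix s id).adjugate.map (↑) := by
    rw [hM_def, ← hZ, submatrix_map]
    exact (RingHom.map_adjugate (Int.castRingHom ℝ) _).symm
  have hM : IsUnit M := by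
    rw [isUnit_iff_isUnit_det, det_adjugate]
    exact hs.pow _
  refine succMin_le_of_norm_le (mul_nonneg (Real.sqrt_nonneg _) (Real.sqrt_nonneg _))
    (fun i => ∑ q, M q i • b q) (fun i => ?_) (hb.sum_smul_of_isUnit hM) (fun i => ?_)
  · refine (Submodule.mem_span_range_iff_exists_fun ℤ).2
      ⟨fun q => (Z.submatrix s id).adjugate q i, ?_⟩
    simp [hMZ, Int.cast_smul_eq_zsmul]
  · have hcoord :
        ∀ j, (∑ q, M q i • b q) j ^ 2 ≤ ((coordMatrix b)ᵀ * coordMatrix b).det := by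
      intro j
      rw [← coordMatrix_mul_apply, mul_adjugate_submatrix_apply]
      exact sq_det_submatrix_le_det_transpose_mul_self _ _
    rw [latticeDet_eq_sqrt_det, ← Real.sqrt_mul (Nat.cast_nonneg _)]
    simpa using EuclideanSpace.norm_le_sqrt_card_mul_of_sq_le hcoord
end
end

section
/- Let b₁, …, b_k be a basis of a lattice L in ℝⁿ with Gram–Schmidt orthogonalization b̂₁, …, b̂_k. Then for each i = 1, …, k, the i-th successive minimum of the unit ball with respect to L satisfies λ_i ≥ min_{j = i, i+1, …, k} ‖b̂_j‖. -/
noncomputable section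

open scoped BigOperators RealInnerProductSpace Pointwise

/-!
If `v = ∑ z_l b_l` is a lattice vector whose last nonzero coefficient is `z_j`, then
`⟪b̂_j, v⟫ = z_j ‖b̂_j‖²`, since `b̂_j` is orthogonal to `b_l` for `l < j`; as `|z_j| ≥ 1`,
Cauchy–Schwarz gives `‖b̂_j‖ ≤ ‖v‖`. Among `i + 1` linearly independent lattice vectors one lies
outside the `i`-dimensional span of `b_0, …, b_{i-1}`, so its last nonzero coefficient has index
`j ≥ i`, and its norm bounds `min_{j ≥ i} ‖b̂_j‖`.
-/

namespace InnerProductSpace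

variable {𝕜 E ι : Type*} [RCLike 𝕜] [NormedAddCommGroup E] [InnerProductSpace 𝕜 E]
  [LinearOrder ι] [LocallyFiniteOrderBot ι] [WellFoundedLT ι]

theorem inner_gramSchmidt_self_eq_norm_sq (f : ι → E) (j : ι) :
    inner 𝕜 (gramSchmidt 𝕜 f j) (f j) = (‖gramSchmidt 𝕜 f j‖ : 𝕜) ^ 2 := by
  conv_lhs => rw [gramSchmidt_def'' 𝕜 f j]
  rw [inner_add_right, inner_sum, inner_self_eq_norm_sq_to_K, add_eq_left]
  refine Finset.sum_eq_zero fun l hl => ?_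
  rw [inner_smul_right, gramSchmidt_orthogonal 𝕜 f (Finset.mem_Iio.mp hl).ne', mul_zero]

variable [Fintype ι]

theorem inner_gramSchmidt_sum_smul {f : ι → E} {c : ι → 𝕜} {j : ι}
    (hc : ∀ l, j < l → c l = 0) :
    inner 𝕜 (gramSchmidt 𝕜 f j) (∑ l, c l • f l) = c j * (‖gramSchmidt 𝕜 f j‖ : 𝕜) ^ 2 := by
  rw [inner_sum, Finset.sum_eq_single j, inner_smul_right, inner_gramSchmidt_self_eq_norm_sq]
  · intro l _ hlj
    rcases hlj.lt_or_gt with hlt | hgt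
    · rw [inner_smul_right, gramSchmidt_inv_triangular 𝕜 f hlt, mul_zero]
    · rw [hc l hgt, zero_smul, inner_zero_right]
  · exact fun h => absurd (Finset.mem_univ j) h

theorem norm_gramSchmidt_le_norm_sum_smul {f : ι → E} {c : ι → 𝕜} {j : ι}
    (hc : ∀ l, j < l → c l = 0) (hcj : 1 ≤ ‖c j‖) :
    ‖gramSchmidt 𝕜 f j‖ ≤ ‖∑ l, c l • f l‖ := by
  set g := gramSchmidt 𝕜 f j
  have hsq : ‖g‖ * ‖g‖ ≤ ‖g‖ * ‖∑ l, c l • f l‖ :=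
    calc ‖g‖ * ‖g‖ ≤ ‖c j‖ * ‖g‖ ^ 2 := by nlinarith [sq_nonneg ‖g‖]
      _ = ‖inner 𝕜 g (∑ l, c l • f l)‖ := by
        rw [inner_gramSchmidt_sum_smul hc, norm_mul, norm_pow, RCLike.norm_ofReal, abs_norm]
      _ ≤ ‖g‖ * ‖∑ l, c l • f l‖ := norm_inner_le_norm _ _
  rcases (norm_nonneg g).eq_or_lt with hg | hg
  · rw [← hg]
    exact norm_nonneg _
  · exact le_of_mul_le_mul_left hsq hg

theorem exists_le_and_norm_gramSchmidt_le_of_mem_span_int {f : ι → E} {v : E}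
    (hv : v ∈ Submodule.span ℤ (Set.range f)) {i : ι}
    (hvi : v ∉ Submodule.span 𝕜 (f '' Set.Iio i)) :
    ∃ j, i ≤ j ∧ ‖gramSchmidt 𝕜 f j‖ ≤ ‖v‖ := by
  classical
  obtain ⟨z, rfl⟩ := (Submodule.mem_span_range_iff_exists_fun ℤ).mp hv
  simp only [← Int.cast_smul_eq_zsmul 𝕜] at hvi ⊢
  set S := Finset.univ.filter fun l => z l ≠ 0
  have hS : ∃ l ∈ S, i ≤ l := by
    by_contra! hS
    refine hvi (Submodule.sum_mem _ fun l _ => ?_)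
    by_cases hl : z l = 0
    · simp [hl]
    · refine Submodule.smul_mem _ _ (Submodule.subset_span ?_)
      exact ⟨l, hS l (by simpa [S] using hl), rfl⟩
  obtain ⟨l, hlS, hil⟩ := hS
  have hne : S.Nonempty := ⟨l, hlS⟩
  refine ⟨S.max' hne, hil.trans (S.le_max' l hlS), norm_gramSchmidt_le_norm_sum_smul ?_ ?_⟩
  · intro l hl
    by_contra h
    exact (S.le_max' l (by simpa [S] using h)).not_gt hl
  · have := S.max'_mem hne
    simp only [S, Finset.mem_filter] at this
    rw [← RCLike.ofReal_intCast, RCLike.norm_ofReal, ← Int.cast_abs]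
    exact_mod_cast Int.one_le_abs this.2

end InnerProductSpace

theorem exists_notMem_span_range_of_linearIndependent {K V ι κ : Type*} [DivisionRing K]
    [AddCommGroup V] [Module K V] [Fintype ι] [Fintype κ] {v : ι → V}
    (hv : LinearIndependent K v) (w : κ → V) (hcard : Fintype.card κ < Fintype.card ι) :
    ∃ t, v t ∉ Submodule.span K (Set.range w) := by
  by_contra! h
  have := FiniteDimensional.span_of_finite K (Set.finite_range w)
  have hle := Submodule.finrank_mono (Submodule.span_le.mpr (Set.range_subset_iff.mpr h))
  rw [finrank_span_eq_card hv] at hle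
  have : Module.finrank K (Submodule.span K (Set.range w)) ≤ Fintype.card κ :=
    finrank_range_le_card w
  omega

theorem le_succMin {n k m : ℕ} {b : Fin k → EuclideanSpace ℝ (Fin n)} (hb : LinearIndependent ℝ b)
    (hm : m ≤ k) {a : ℝ}
    (h : ∀ v : Fin m → EuclideanSpace ℝ (Fin n), (∀ t, v t ∈ Submodule.span ℤ (Set.range b)) →
      LinearIndependent ℝ v → ∃ t, a ≤ ‖v t‖) :
    a ≤ succMin b m := by
  refine le_csInf ?_ fun lam ⟨_, v, hv, hli, hle⟩ => ?_
  · obtain ⟨M, hM⟩ := (Set.finite_range fun t : Fin m => ‖b (Fin.castLE hm t)‖).bddAbove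
    refine ⟨max 1 M, by positivity, fun t => b (Fin.castLE hm t),
      fun t => Submodule.subset_span ⟨_, rfl⟩, hb.comp _ (Fin.castLE_injective hm),
      fun t => (hM ⟨t, rfl⟩).trans (le_max_right 1 M)⟩
  · obtain ⟨t, ht⟩ := h v hv hli
    exact ht.trans (hle t)

/-- Lemma 1: `λ_i ≥ min_{j = i, …, k} ‖b̂_j‖`. -/
theorem succMin_ge_min_gramSchmidt_norm {n k : ℕ} (b : Fin k → EuclideanSpace ℝ (Fin n))
    (hb : LinearIndependent ℝ b) (i : Fin k) :
    (Finset.univ.filter fun j : Fin k => i ≤ j).inf' ⟨i, by simp⟩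
        (fun j => ‖InnerProductSpace.gramSchmidt ℝ b j‖) ≤ succMin b ((i : ℕ) + 1) := by
  refine le_succMin hb i.isLt fun v hv hli => ?_
  obtain ⟨t, ht⟩ := exists_notMem_span_range_of_linearIndependent hli
    (fun l : Set.Iio i => b l) (by simp)
  obtain ⟨j, hij, hj⟩ := InnerProductSpace.exists_le_and_norm_gramSchmidt_le_of_mem_span_int
    (hv t) (by rwa [Set.image_eq_range])
  exact ⟨t, (Finset.inf'_le _ (by simpa using hij)).trans hj⟩

end
end

section
/- Let L ⊂ ℤⁿ be a k-dimensional lattice given by an LLL-reduced basis b₁, …, b_k. Then max_{i=1,…,k} ‖b_i‖ ≤ 2^{(k−1)/2} √n · det(L). -/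
noncomputable section

open scoped BigOperators RealInnerProductSpace Pointwise

/-!
Expanding `b_i` in the Gram–Schmidt basis, the Lovász condition makes `j ↦ 2^j ‖b̂_j‖²` monotone,
and size reduction then gives `‖b_i‖² ≤ 2^(i-1) ‖b̂_i‖² ≤ 2^(k-1) ‖b̂_k‖²`. On the other hand
`det(L)² = ∏_j ‖b̂_j‖²`, and the Gram determinant of the integer vectors `b_1, …, b_(k-1)` is a
positive integer, so `‖b̂_k‖² ≤ det(L)²`. Finally `√n ≥ 1`, since `ℝⁿ` contains the nonzero `b_i`.
-/

open Finset Matrix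

section Gram

variable {E : Type*} [NormedAddCommGroup E] [InnerProductSpace ℝ E] {ι : Type*} [Fintype ι]

lemma Matrix.gram_sum_smul (M : Matrix ι ι ℝ) (v : ι → E) :
    gram ℝ (fun i => ∑ j, M i j • v j) = M * gram ℝ v * Mᵀ := by
  ext p q
  simp only [gram_apply, sum_inner, inner_sum, real_inner_smul_left, real_inner_smul_right,
    mul_apply, transpose_apply, sum_mul]
  exact sum_congr rfl fun _ _ => sum_congr rfl fun _ _ => by ring

end Gram

lemma Finset.sum_eq_add_sum_Iio {ι M : Type*} [LinearOrder ι] [LocallyFiniteOrderBot ι]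
    [Fintype ι] [AddCommMonoid M] {f : ι → M} {i : ι} (hf : ∀ j, i < j → f j = 0) :
    ∑ j, f j = f i + ∑ j ∈ Iio i, f j := by
  rw [← sum_subset (subset_univ (Iic i)) fun j _ hj => hf j (not_le.mp (mt mem_Iic.mpr hj)),
    ← Iio_insert, sum_insert notMem_Iio_self]

namespace InnerProductSpace

variable {E : Type*} [NormedAddCommGroup E] [InnerProductSpace ℝ E]
  {ι : Type*} [LinearOrder ι] [LocallyFiniteOrderBot ι] [WellFoundedLT ι]

/-- The Gram–Schmidt coefficients `μ_{ij}`, so that `b_i = ∑_j μ_{ij} b̂_j`. -/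
def gramSchmidtCoeff (b : ι → E) : Matrix ι ι ℝ :=
  of fun i j => if i = j then 1 else ⟪b i, gramSchmidt ℝ b j⟫ / ‖gramSchmidt ℝ b j‖ ^ 2

lemma gramSchmidtCoeff_self (b : ι → E) (i : ι) : gramSchmidtCoeff b i i = 1 := by
  simp [gramSchmidtCoeff]

lemma gramSchmidtCoeff_of_ne (b : ι → E) {i j : ι} (hij : i ≠ j) :
    gramSchmidtCoeff b i j = ⟪b i, gramSchmidt ℝ b j⟫ / ‖gramSchmidt ℝ b j‖ ^ 2 := by
  simp [gramSchmidtCoeff, hij]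

lemma gramSchmidtCoeff_eq_zero (b : ι → E) {i j : ι} (hij : i < j) :
    gramSchmidtCoeff b i j = 0 := by
  rw [gramSchmidtCoeff_of_ne b hij.ne, real_inner_comm, gramSchmidt_inv_triangular ℝ b hij,
    zero_div]

lemma sum_gramSchmidtCoeff_smul [Fintype ι] (b : ι → E) (i : ι) :
    ∑ j, gramSchmidtCoeff b i j • gramSchmidt ℝ b j = b i := by
  rw [sum_eq_add_sum_Iio (i := i) fun j hij => by rw [gramSchmidtCoeff_eq_zero b hij, zero_smul],
    gramSchmidtCoeff_self, one_smul, gramSchmidt_def'' ℝ b i]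
  congr 1
  refine sum_congr rfl fun j hj => ?_
  rw [gramSchmidtCoeff_of_ne b (mem_Iio.mp hj).ne', real_inner_comm]
  rfl

lemma gram_gramSchmidt [DecidableEq ι] (b : ι → E) :
    gram ℝ (gramSchmidt ℝ b) = diagonal fun i => ‖gramSchmidt ℝ b i‖ ^ 2 := by
  ext i j
  rcases eq_or_ne i j with rfl | hij
  · simp [gram_apply]
  · simp [gram_apply, gramSchmidt_orthogonal ℝ b hij, hij]

lemma gram_eq_gramSchmidtCoeff_mul [Fintype ι] [DecidableEq ι] (b : ι → E) :
    gram ℝ b = gramSchmidtCoeff b * diagonal (fun i => ‖gramSchmidt ℝ b i‖ ^ 2) *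
      (gramSchmidtCoeff b)ᵀ := by
  conv_lhs => rw [← funext (sum_gramSchmidtCoeff_smul b)]
  rw [gram_sum_smul, gram_gramSchmidt]

theorem det_gram_eq_prod_norm_gramSchmidt_sq [Fintype ι] [DecidableEq ι] (b : ι → E) :
    (gram ℝ b).det = ∏ i, ‖gramSchmidt ℝ b i‖ ^ 2 := by
  have hdet : (gramSchmidtCoeff b).det = 1 := by
    rw [det_of_isLowerTriangular _ fun _ _ hij =>
      gramSchmidtCoeff_eq_zero b (OrderDual.toDual_lt_toDual.mp hij)]
    simp [gramSchmidtCoeff_self]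
  rw [gram_eq_gramSchmidtCoeff_mul, det_mul, det_mul, det_transpose, hdet, det_diagonal,
    one_mul, mul_one]

theorem norm_sq_eq_norm_gramSchmidt_sq_add_sum [Fintype ι] (b : ι → E) (i : ι) :
    ‖b i‖ ^ 2 = ‖gramSchmidt ℝ b i‖ ^ 2 +
      ∑ j ∈ Iio i, gramSchmidtCoeff b i j ^ 2 * ‖gramSchmidt ℝ b j‖ ^ 2 := by
  classical
  have h := congrFun (congrFun (gram_eq_gramSchmidtCoeff_mul b) i) i
  rw [gram_apply, real_inner_self_eq_norm_sq, mul_apply] at h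
  simp only [mul_diagonal, transpose_apply] at h
  rw [h, sum_eq_add_sum_Iio (i := i) fun j hij => by simp [gramSchmidtCoeff_eq_zero b hij],
    gramSchmidtCoeff_self, one_mul, mul_one]
  exact congrArg _ (sum_congr rfl fun j _ => by ring)

lemma gramSchmidt_comp_castSucc {l : ℕ} (b : Fin (l + 1) → E) (j : Fin l) :
    gramSchmidt ℝ (b ∘ Fin.castSucc) j = gramSchmidt ℝ b j.castSucc := by
  induction j using WellFoundedLT.induction with
  | _ j ih =>
    rw [gramSchmidt_def ℝ (b ∘ _), gramSchmidt_def ℝ b, ← Fin.map_castSuccEmb_Iio, sum_map]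
    refine congrArg _ (sum_congr rfl fun i hi => ?_)
    rw [ih i (mem_Iio.mp hi)]
    rfl

end InnerProductSpace

open InnerProductSpace

lemma latticeDet_sq {n k : ℕ} (b : Fin k → EuclideanSpace ℝ (Fin n)) :
    latticeDet b ^ 2 = (gram ℝ b).det :=
  Real.sq_sqrt (posSemidef_gram ℝ b).det_nonneg

theorem one_le_det_gram_of_isIntegerVec {n : ℕ} {ι : Type*} [Fintype ι] [DecidableEq ι]
    {b : ι → EuclideanSpace ℝ (Fin n)} (hb : LinearIndependent ℝ b)
    (hint : ∀ i, IsIntegerVec (b i)) : 1 ≤ (gram ℝ b).det := by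
  choose z hz using hint
  have hgram : gram ℝ b = (of fun p q => ∑ t, z p t * z q t).map (Int.cast : ℤ → ℝ) := by
    ext p q
    simp [gram_apply, PiLp.inner_apply, hz, mul_comm]
  have hpos := (posDef_gram_of_linearIndependent hb).det_pos
  rw [hgram, ← Int.cast_det] at hpos ⊢
  exact_mod_cast hpos

theorem norm_gramSchmidt_last_sq_le_det_gram {n l : ℕ}
    {b : Fin (l + 1) → EuclideanSpace ℝ (Fin n)} (hb : LinearIndependent ℝ b)
    (hint : ∀ i, IsIntegerVec (b i)) :
    ‖gramSchmidt ℝ b (Fin.last l)‖ ^ 2 ≤ (gram ℝ b).det := by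
  have hprefix := one_le_det_gram_of_isIntegerVec (hb.comp _ (Fin.castSucc_injective l))
    fun i => hint i.castSucc
  rw [det_gram_eq_prod_norm_gramSchmidt_sq] at hprefix ⊢
  rw [Fin.prod_univ_castSucc]
  simp only [gramSchmidt_comp_castSucc] at hprefix
  exact le_mul_of_one_le_left (sq_nonneg _) hprefix

lemma Finset.sum_range_two_pow_sub (m : ℕ) :
    ∑ j ∈ range m, (2 : ℝ) ^ (m - j) = 2 ^ (m + 1) - 2 := by
  induction m with
  | zero => norm_num
  | succ m ih =>
    rw [sum_range_succ', Nat.sub_zero]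
    simp only [Nat.add_sub_add_right, ih]
    ring

namespace IsLLLReduced

lemma sq_gsMu_le {n k : ℕ} {b : Fin k → EuclideanSpace ℝ (Fin n)} (hLLL : IsLLLReduced b)
    {i j : Fin k} (hji : j < i) : gsMu b i j ^ 2 ≤ 1 / 4 :=
  calc gsMu b i j ^ 2 = |gsMu b i j| ^ 2 := (sq_abs _).symm
    _ ≤ (1 / 2) ^ 2 := pow_le_pow_left₀ (abs_nonneg _) (hLLL.1 i j hji) 2
    _ = 1 / 4 := by norm_num

variable {n l : ℕ} {b : Fin (l + 1) → EuclideanSpace ℝ (Fin n)}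

theorem monotone_two_pow_mul_norm_gramSchmidt_sq (hLLL : IsLLLReduced b) :
    Monotone fun i : Fin (l + 1) => 2 ^ (i : ℕ) * ‖gramSchmidt ℝ b i‖ ^ 2 := by
  refine Fin.monotone_iff_le_succ.mpr fun i => ?_
  have hlovasz := hLLL.2 i.succ i.castSucc (by simp)
  have hμ := mul_le_mul_of_nonneg_right (hLLL.sq_gsMu_le (Fin.castSucc_lt_succ (i := i)))
    (sq_nonneg ‖gramSchmidt ℝ b i.castSucc‖)
  simp only [Fin.val_castSucc, Fin.val_succ, pow_succ]
  nlinarith [pow_pos (two_pos : (0 : ℝ) < 2) (i : ℕ)]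

lemma norm_gramSchmidt_sq_le_two_pow_mul (hLLL : IsLLLReduced b) {i j : Fin (l + 1)}
    (hji : j ≤ i) :
    ‖gramSchmidt ℝ b j‖ ^ 2 ≤ 2 ^ ((i : ℕ) - j) * ‖gramSchmidt ℝ b i‖ ^ 2 := by
  have h := hLLL.monotone_two_pow_mul_norm_gramSchmidt_sq hji
  simp only at h
  rw [← Nat.add_sub_cancel' (Fin.le_def.mp hji), pow_add, mul_assoc] at h
  exact le_of_mul_le_mul_left h (by positivity)

theorem norm_sq_le_two_pow_mul_norm_gramSchmidt_sq (hLLL : IsLLLReduced b) (i : Fin (l + 1)) :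
    ‖b i‖ ^ 2 ≤ 2 ^ (i : ℕ) * ‖gramSchmidt ℝ b i‖ ^ 2 := by
  set w := ‖gramSchmidt ℝ b i‖ ^ 2
  have hterm : ∀ j ∈ Iio i,
      gramSchmidtCoeff b i j ^ 2 * ‖gramSchmidt ℝ b j‖ ^ 2 ≤ 2 ^ ((i : ℕ) - j) * w / 4 := by
    intro j hj
    have hji := mem_Iio.mp hj
    rw [gramSchmidtCoeff_of_ne b hji.ne']
    have := mul_le_mul (hLLL.sq_gsMu_le hji) (hLLL.norm_gramSchmidt_sq_le_two_pow_mul hji.le)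
      (sq_nonneg _) (by norm_num)
    unfold gsMu at this
    linarith
  have hgeom : ∑ j ∈ Iio i, (2 : ℝ) ^ ((i : ℕ) - j) = 2 ^ ((i : ℕ) + 1) - 2 := by
    rw [← sum_range_two_pow_sub, ← Nat.Iio_eq_range, ← Fin.map_valEmbedding_Iio, sum_map]
    rfl
  calc ‖b i‖ ^ 2 = w + ∑ j ∈ Iio i, gramSchmidtCoeff b i j ^ 2 * ‖gramSchmidt ℝ b j‖ ^ 2 :=
        norm_sq_eq_norm_gramSchmidt_sq_add_sum b i
    _ ≤ w + ∑ j ∈ Iio i, 2 ^ ((i : ℕ) - j) * w / 4 := by gcongr with j hj; exact hterm j hj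
    _ = (2 ^ (i : ℕ) + 1) / 2 * w := by rw [← sum_div, ← sum_mul, hgeom]; ring
    _ ≤ 2 ^ (i : ℕ) * w := by
        gcongr
        linarith [one_le_pow₀ (one_le_two : (1 : ℝ) ≤ 2) (n := i)]

theorem norm_sq_le_two_pow_mul_norm_gramSchmidt_last_sq (hLLL : IsLLLReduced b)
    (i : Fin (l + 1)) : ‖b i‖ ^ 2 ≤ 2 ^ l * ‖gramSchmidt ℝ b (Fin.last l)‖ ^ 2 :=
  (hLLL.norm_sq_le_two_pow_mul_norm_gramSchmidt_sq i).trans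
    (hLLL.monotone_two_pow_mul_norm_gramSchmidt_sq (Fin.le_last i))

end IsLLLReduced

/-- Lemma 3: for an LLL-reduced basis of a `k`-dimensional lattice
`L ⊂ ℤⁿ`, `max_i ‖b_i‖ ≤ 2^{(k−1)/2} √n · det(L)`. -/
theorem norm_le_two_rpow_mul_sqrt_mul_det {n k : ℕ}
    (b : Fin k → EuclideanSpace ℝ (Fin n)) (hb : LinearIndependent ℝ b)
    (hint : ∀ i, IsIntegerVec (b i)) (hLLL : IsLLLReduced b) (i : Fin k) :
    ‖b i‖ ≤ (2 : ℝ) ^ (((k : ℝ) - 1) / 2) * Real.sqrt n * latticeDet b := by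
  obtain ⟨l, rfl⟩ : ∃ l, k = l + 1 := Nat.exists_eq_succ_of_ne_zero i.pos.ne'
  have hn : 1 ≤ Real.sqrt n := by
    refine Real.one_le_sqrt.mpr (Nat.one_le_cast.mpr (Nat.pos_of_ne_zero fun hn => ?_))
    subst hn
    exact hb.ne_zero i (Subsingleton.elim _ _)
  have hsq : ‖b i‖ ^ 2 ≤ 2 ^ l * latticeDet b ^ 2 := by
    rw [latticeDet_sq]
    calc ‖b i‖ ^ 2 ≤ 2 ^ l * ‖gramSchmidt ℝ b (Fin.last l)‖ ^ 2 :=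
          hLLL.norm_sq_le_two_pow_mul_norm_gramSchmidt_last_sq i
      _ ≤ 2 ^ l * (gram ℝ b).det := by
          gcongr; exact norm_gramSchmidt_last_sq_le_det_gram hb hint
  have hpow : ((2 : ℝ) ^ ((((l + 1 : ℕ) : ℝ) - 1) / 2)) ^ 2 = 2 ^ l := by
    rw [← Real.rpow_natCast, ← Real.rpow_mul two_pos.le]
    norm_num
  have hD : 0 ≤ latticeDet b := Real.sqrt_nonneg _
  calc ‖b i‖ ≤ (2 : ℝ) ^ ((((l + 1 : ℕ) : ℝ) - 1) / 2) * 1 * latticeDet b := by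
        rw [mul_one, ← pow_le_pow_iff_left₀ (norm_nonneg _) (by positivity) two_ne_zero,
          mul_pow, hpow]
        exact hsq
    _ ≤ _ := by gcongr
end
end

section
/- Let L be a k-dimensional lattice in ℝⁿ and B the unit Euclidean ball in span_ℝ(L). Then det(L) ≤ Π_{i=1}^k λ_i(B, L) ≤ γ_k^{k/2} det(L), where γ_k is the k-dimensional Hermite constant. -/
noncomputable section

open scoped BigOperators RealInnerProductSpace Pointwise

/-!
Pick successively shortest lattice vectors `u₀, …, u_{k-1}`: `u i` is a shortest vector of `L`
outside the span of its predecessors, so that `λ_{i+1} = ‖u i‖`. They span a sublattice of `L`,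
whence `det L ≤ det(u) ≤ ∏ ‖u i‖` by Hadamard's inequality.

For the upper bound, take Gram–Schmidt coordinates of `u` and divide the `m`-th one by `‖u m‖`.
If `j` is the last nonzero coordinate of a nonzero `x ∈ L`, then `x ∉ span(u₀, …, u_{j-1})`, so
`‖x‖ ≥ ‖u j‖ ≥ ‖u m‖` for every `m ≤ j`; hence the rescaled lattice has first minimum at least `1`.
Its determinant is `det L / ∏ ‖u i‖`, and the definition of `γ_k` gives
`1 ≤ γ_k (det L / ∏ λ_i)^{2/k}`.
-/

open Submodule Set Module MeasureTheory InnerProductSpace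
open scoped Matrix

section SuccMinFamily

variable {E : Type*} [NormedAddCommGroup E] [NormedSpace ℝ E]

theorem LinearIndependent.finite_inter_span_int [FiniteDimensional ℝ E] {ι : Type*} {b : ι → E}
    (hb : LinearIndependent ℝ b) {s : Set E} (hs : Bornology.IsBounded s) :
    (s ∩ span ℤ (range b)).Finite := by
  have hrange : LinearIndepOn ℝ id (range b) := (linearIndepOn_id_range_iff hb.injective).mpr hb
  refine (ZSpan.setFinite_inter (Basis.extend hrange) hs).subset
    (inter_subset_inter_right _ (span_mono ?_))
  rw [Basis.coe_extend, Subtype.range_coe]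
  exact hrange.subset_extend _

theorem exists_forall_norm_le_of_not_subset [FiniteDimensional ℝ E] {ι : Type*}
    {b : ι → E} (hb : LinearIndependent ℝ b) {W : Submodule ℝ E}
    (hW : ¬ (span ℤ (range b) : Set E) ⊆ W) :
    ∃ z ∈ span ℤ (range b), z ∉ W ∧ ∀ x ∈ span ℤ (range b), x ∉ W → ‖z‖ ≤ ‖x‖ := by
  obtain ⟨x₀, hx₀, hx₀W⟩ := not_subset.mp hW
  let T := {x | x ∈ Metric.closedBall 0 ‖x₀‖ ∩ span ℤ (range b) ∧ x ∉ W}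
  have hx₀T : x₀ ∈ T := ⟨⟨mem_closedBall_zero_iff.mpr le_rfl, hx₀⟩, hx₀W⟩
  obtain ⟨z, ⟨⟨-, hz⟩, hzW⟩, hzmin⟩ := exists_min_image T (‖·‖)
    ((hb.finite_inter_span_int Metric.isBounded_closedBall).subset fun x hx => hx.1) ⟨x₀, hx₀T⟩
  refine ⟨z, hz, hzW, fun x hx hxW => ?_⟩
  rcases le_total ‖x‖ ‖x₀‖ with hle | hle
  · exact hzmin x ⟨⟨mem_closedBall_zero_iff.mpr hle, hx⟩, hxW⟩
  · exact (hzmin x₀ hx₀T).trans hle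

structure IsSuccMinFamily (L : Set E) {m : ℕ} (u : Fin m → E) : Prop where
  mem : ∀ i, u i ∈ L
  linearIndependent : LinearIndependent ℝ u
  norm_le : ∀ i, ∀ x ∈ L, x ∉ span ℝ (u '' Iio i) → ‖u i‖ ≤ ‖x‖

namespace IsSuccMinFamily

variable {L : Set E} {m : ℕ} {u : Fin m → E}

theorem empty (L : Set E) : IsSuccMinFamily L (Fin.elim0 : Fin 0 → E) :=
  ⟨fun i => i.elim0, linearIndependent_empty_type, fun i => i.elim0⟩

theorem snoc (hu : IsSuccMinFamily L u) {z : E} (hz : z ∈ L) (hzu : z ∉ span ℝ (range u))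
    (hzmin : ∀ x ∈ L, x ∉ span ℝ (range u) → ‖z‖ ≤ ‖x‖) :
    IsSuccMinFamily L (Fin.snoc u z : Fin (m + 1) → E) where
  mem := Fin.lastCases (by simpa using hz) fun i => by simpa using hu.mem i
  linearIndependent := linearIndependent_finSnoc.mpr ⟨hu.linearIndependent, hzu⟩
  norm_le := by
    refine Fin.lastCases ?_ fun i => ?_
    · have : Iio (Fin.last m) = range Fin.castSucc := by
        ext i; simp [Fin.range_castSucc, Fin.lt_def]
      rw [this, ← range_comp, Fin.snoc_comp_castSucc, Fin.snoc_last]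
      exact hzmin
    · rw [← Fin.image_castSucc_Iio, image_image]
      simpa using hu.norm_le i

theorem ne_zero (hu : IsSuccMinFamily L u) (i : Fin m) : u i ≠ 0 :=
  hu.linearIndependent.ne_zero i

theorem norm_pos (hu : IsSuccMinFamily L u) (i : Fin m) : 0 < ‖u i‖ :=
  norm_pos_iff.mpr (hu.ne_zero i)

theorem norm_mono (hu : IsSuccMinFamily L u) : Monotone fun i => ‖u i‖ := by
  intro i j hij
  rcases hij.eq_or_lt with rfl | hij
  · exact le_rfl
  refine hu.norm_le i (u j) (hu.mem j) fun hmem => ?_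
  exact hu.linearIndependent.notMem_span_image (s := Iio j) (by simp)
    (span_mono (image_mono (Iio_subset_Iio hij.le)) hmem)

end IsSuccMinFamily

theorem exists_isSuccMinFamily [FiniteDimensional ℝ E] {k : ℕ} {b : Fin k → E}
    (hb : LinearIndependent ℝ b) :
    ∃ u : Fin k → E, IsSuccMinFamily (span ℤ (range b)) u := by
  suffices ∀ m ≤ k, ∃ u : Fin m → E, IsSuccMinFamily (span ℤ (range b)) u from this k le_rfl
  intro m
  induction m with
  | zero => exact fun _ => ⟨_, .empty _⟩
  | succ m ih =>
    intro hm
    obtain ⟨u, hu⟩ := ih (by omega)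
    have hspan : ¬ (span ℤ (range b) : Set E) ⊆ span ℝ (range u) := by
      intro h
      have := finrank_mono (span_le.mpr ((subset_span (R := ℤ)).trans h))
      rw [finrank_span_eq_card hb, Fintype.card_fin, finrank_span_eq_card hu.linearIndependent,
        Fintype.card_fin] at this
      omega
    obtain ⟨z, hz, hzu, hzmin⟩ := exists_forall_norm_le_of_not_subset hb hspan
    exact ⟨_, hu.snoc hz hzu hzmin⟩

end SuccMinFamily

section SuccessiveMinima

variable {n k : ℕ} {b : Fin k → EuclideanSpace ℝ (Fin n)}

theorem IsSuccMinFamily.succMin_eq {m : ℕ} {u : Fin m → EuclideanSpace ℝ (Fin n)}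
    (hu : IsSuccMinFamily (span ℤ (range b)) u) (i : Fin m) :
    succMin b (i + 1) = ‖u i‖ := by
  have hmem : ‖u i‖ ∈ {lam : ℝ | 0 < lam ∧ ∃ v : Fin (i + 1) → EuclideanSpace ℝ (Fin n),
      (∀ j, v j ∈ span ℤ (range b)) ∧ LinearIndependent ℝ v ∧ ∀ j, ‖v j‖ ≤ lam} :=
    ⟨hu.norm_pos i, fun j => u (Fin.castLE i.isLt j), fun j => hu.mem _,
      hu.linearIndependent.comp _ (Fin.castLE_injective _),
      fun j => hu.norm_mono (Fin.le_def.mpr (Nat.le_of_lt_succ j.isLt))⟩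
  refine le_antisymm (csInf_le ⟨0, fun _ h => h.1.le⟩ hmem) (le_csInf ⟨_, hmem⟩ ?_)
  rintro lam ⟨-, v, hvL, hv, hvlam⟩
  obtain ⟨j, hj⟩ : ∃ j, v j ∉ span ℝ (u '' Iio i) := by
    by_contra! h
    have hle := finrank_mono (span_le.mpr (range_subset_iff.mpr h))
    have hcard : finrank ℝ (span ℝ (u '' Iio i)) ≤ i := by
      rw [image_eq_range]
      simpa [Set.finrank] using finrank_range_le_card (R := ℝ) fun j : Iio i => u j
    rw [finrank_span_eq_card hv, Fintype.card_fin] at hle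
    omega
  exact (hu.norm_le i _ (hvL j) hj).trans (hvlam j)

theorem succMin_one_le_norm {x : EuclideanSpace ℝ (Fin n)} (hx : x ∈ span ℤ (range b))
    (hx0 : x ≠ 0) : succMin b 1 ≤ ‖x‖ :=
  csInf_le ⟨0, fun _ h => h.1.le⟩ ⟨norm_pos_iff.mpr hx0, fun _ => x, fun _ => hx,
    linearIndependent_unique_iff.mpr hx0, fun _ => le_rfl⟩

theorem le_succMin_one (hk : 0 < k) (hb : LinearIndependent ℝ b) {r : ℝ}
    (h : ∀ x ∈ span ℤ (range b), x ≠ 0 → r ≤ ‖x‖) : r ≤ succMin b 1 := by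
  obtain ⟨u, hu⟩ := exists_isSuccMinFamily hb
  rw [← zero_add 1, ← Fin.val_mk hk, hu.succMin_eq]
  exact h _ (hu.mem _) (hu.ne_zero _)

theorem succMin_nonneg (i : ℕ) : 0 ≤ succMin b i :=
  Real.sInf_nonneg fun _ h => h.1.le

end SuccessiveMinima

section InnerProductSpace

variable {E : Type*} [NormedAddCommGroup E] [InnerProductSpace ℝ E]

theorem Orthonormal.inner_eq_sum_of_mem_span {ι : Type*} [Fintype ι] {g : ι → E}
    (hg : Orthonormal ℝ g) {x y : E} (hx : x ∈ span ℝ (range g)) (hy : y ∈ span ℝ (range g)) :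
    ⟪x, y⟫ = ∑ m, ⟪g m, x⟫ * ⟪g m, y⟫ := by
  obtain ⟨a, rfl⟩ := (mem_span_range_iff_exists_fun ℝ).mp hx
  obtain ⟨c, rfl⟩ := (mem_span_range_iff_exists_fun ℝ).mp hy
  simp [hg.inner_right_fintype, sum_inner, real_inner_smul_left]

theorem Orthonormal.norm_sq_eq_sum_of_mem_span {ι : Type*} [Fintype ι] {g : ι → E}
    (hg : Orthonormal ℝ g) {x : E} (hx : x ∈ span ℝ (range g)) :
    ‖x‖ ^ 2 = ∑ m, ⟪g m, x⟫ ^ 2 := by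
  rw [← real_inner_self_eq_norm_sq, hg.inner_eq_sum_of_mem_span hx hx]
  simp [sq]

end InnerProductSpace

section LatticeDet

variable {n k : ℕ}

theorem latticeDet_eq_abs_det_inner {g w : Fin k → EuclideanSpace ℝ (Fin n)}
    (hg : Orthonormal ℝ g) (hw : ∀ i, w i ∈ span ℝ (range g)) :
    latticeDet w = |(Matrix.of fun i m => ⟪g m, w i⟫).det| := by
  have hgram : Matrix.gram ℝ w =
      Matrix.of (fun i m => ⟪g m, w i⟫) * (Matrix.of fun i m => ⟪g m, w i⟫)ᵀ := by
    ext i j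
    simp [Matrix.mul_apply, hg.inner_eq_sum_of_mem_span (hw i) (hw j)]
  rw [latticeDet, ← Matrix.gram, hgram, Matrix.det_mul, Matrix.det_transpose, ← sq,
    Real.sqrt_sq_eq_abs]

theorem latticeDet_eq_abs_det (w : Fin k → EuclideanSpace ℝ (Fin k)) :
    latticeDet w = |(Matrix.of fun i m => w i m).det| := by
  have h := latticeDet_eq_abs_det_inner (EuclideanSpace.basisFun (Fin k) ℝ).orthonormal
    (w := w) fun i => by simp [← OrthonormalBasis.coe_toBasis, Basis.span_eq]
  simpa [EuclideanSpace.inner_single_left] using h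

theorem latticeDet_pos {w : Fin k → EuclideanSpace ℝ (Fin n)} (hw : LinearIndependent ℝ w) :
    0 < latticeDet w :=
  Real.sqrt_pos.mpr (Matrix.posDef_gram_of_linearIndependent hw).det_pos

theorem linearIndependent_of_latticeDet_pos {w : Fin k → EuclideanSpace ℝ (Fin n)}
    (hw : 0 < latticeDet w) : LinearIndependent ℝ w :=
  Matrix.linearIndependent_of_det_gram_ne_zero (Real.sqrt_pos.mp hw).ne'

theorem latticeDet_le_of_mem_span_int {b u : Fin k → EuclideanSpace ℝ (Fin n)}
    (hu : LinearIndependent ℝ u) (hmem : ∀ i, u i ∈ span ℤ (range b)) :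
    latticeDet b ≤ latticeDet u := by
  choose z hz using fun i => (mem_span_range_iff_exists_fun ℤ).mp (hmem i)
  set Z : Matrix (Fin k) (Fin k) ℝ := (Matrix.of z).map (Int.cast : ℤ → ℝ)
  have hgram : Matrix.gram ℝ u = Z * Matrix.gram ℝ b * Zᵀ := by
    ext i j
    simp only [← hz, Matrix.gram_apply, Matrix.mul_apply, Z, Matrix.map_apply, Matrix.of_apply,
      Matrix.transpose_apply, sum_inner, inner_sum, ← Int.cast_smul_eq_zsmul ℝ,
      real_inner_smul_left, real_inner_smul_right, Finset.sum_mul]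
    exact Finset.sum_congr rfl fun _ _ => Finset.sum_congr rfl fun _ _ => by ring
  have hdet : latticeDet u = |Z.det| * latticeDet b := by
    rw [latticeDet, latticeDet, ← Matrix.gram, ← Matrix.gram, hgram, Matrix.det_mul,
      Matrix.det_mul, Matrix.det_transpose, mul_right_comm, ← sq, Real.sqrt_mul (sq_nonneg _),
      Real.sqrt_sq_eq_abs]
  have hZ : Z.det = ((Matrix.of z).det : ℝ) := (RingHom.map_det (Int.castRingHom ℝ) _).symm
  have hZ0 : (Matrix.of z).det ≠ 0 := by
    intro h
    have := latticeDet_pos hu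
    rw [hdet, hZ, h] at this
    simp at this
  have hZ1 : (1 : ℝ) ≤ |Z.det| := by
    rw [hZ, ← Int.cast_abs]
    exact_mod_cast Int.one_le_abs hZ0
  rw [hdet]
  exact le_mul_of_one_le_left (Real.sqrt_nonneg _) hZ1

theorem latticeDet_le_prod_norm {u : Fin k → EuclideanSpace ℝ (Fin n)}
    (hu : LinearIndependent ℝ u) : latticeDet u ≤ ∏ i, ‖u i‖ := by
  set g := gramSchmidtNormed ℝ u
  have hg : Orthonormal ℝ g := gramSchmidtNormed_orthonormal hu
  have hspan : ∀ i, u i ∈ span ℝ (range g) := fun i => by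
    rw [span_gramSchmidtNormed_range, span_gramSchmidt]
    exact subset_span (mem_range_self i)
  have htri : (Matrix.of fun i m => ⟪g m, u i⟫).IsLowerTriangular :=
    fun i m (him : i < m) => by
      simp [g, gramSchmidtNormed, real_inner_smul_left, gramSchmidt_inv_triangular ℝ u him]
  rw [latticeDet_eq_abs_det_inner hg hspan, Matrix.det_of_isLowerTriangular _ htri,
    Finset.abs_prod]
  refine Finset.prod_le_prod (fun _ _ => abs_nonneg _) fun i _ => ?_
  simpa [hg.1 i] using abs_real_inner_le_norm (g i) (u i)

end LatticeDet

section ScaledCoords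

variable {E : Type*} [NormedAddCommGroup E] [InnerProductSpace ℝ E] {k : ℕ}

theorem IsSuccMinFamily.one_le_sum_sq {L : Set E} {u : Fin k → E} (hu : IsSuccMinFamily L u)
    {x : E} (hxL : x ∈ L) (hx : x ∈ span ℝ (range u)) (hx0 : x ≠ 0) :
    1 ≤ ∑ m, (⟪gramSchmidtNormed ℝ u m, x⟫ / ‖u m‖) ^ 2 := by
  set g := gramSchmidtNormed ℝ u
  have hg : Orthonormal ℝ g := gramSchmidtNormed_orthonormal hu.linearIndependent
  have hnorm := hg.norm_sq_eq_sum_of_mem_span (x := x)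
    (by rwa [span_gramSchmidtNormed_range, span_gramSchmidt])
  have hS : (Finset.univ.filter fun m => ⟪g m, x⟫ ≠ 0).Nonempty := by
    by_contra! h
    simp only [Finset.filter_eq_empty_iff, Finset.mem_univ, ne_eq, not_not, true_implies] at h
    simp [h, hx0] at hnorm
  set j := (Finset.univ.filter fun m => ⟪g m, x⟫ ≠ 0).max' hS
  have hj : ⟪g j, x⟫ ≠ 0 := (Finset.mem_filter.mp (Finset.max'_mem _ hS)).2
  have hzero : ∀ m, j < m → ⟪g m, x⟫ = 0 := fun m hm => by
    by_contra h
    exact (Finset.le_max' _ m (by simp [h])).not_gt hm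
  -- `g j` is orthogonal to `span (u '' Iio j)`, so `x` lies outside it
  have hxj : ‖u j‖ ≤ ‖x‖ := by
    refine hu.norm_le j x hxL fun hmem => hj ?_
    rw [← span_gramSchmidt_Iio, ← span_gramSchmidtNormed] at hmem
    refine mem_orthogonal_singleton_iff_inner_right.mp (span_le.mpr ?_ hmem)
    rintro _ ⟨m, hm, rfl⟩
    exact mem_orthogonal_singleton_iff_inner_right.mpr (hg.2 (ne_of_gt hm))
  have huj := hu.norm_pos j
  calc 1 ≤ ‖x‖ ^ 2 / ‖u j‖ ^ 2 := by
        rw [one_le_div (by positivity)]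
        exact pow_le_pow_left₀ huj.le hxj 2
    _ = ∑ m, ⟪g m, x⟫ ^ 2 / ‖u j‖ ^ 2 := by rw [hnorm, Finset.sum_div]
    _ ≤ ∑ m, (⟪g m, x⟫ / ‖u m‖) ^ 2 := Finset.sum_le_sum fun m _ => by
        rcases le_or_gt m j with hmj | hmj
        · rw [div_pow]
          have := hu.norm_pos m
          gcongr
          exact hu.norm_mono hmj
        · simp [hzero m hmj]

def scaledCoords (g : Fin k → E) (r : Fin k → ℝ) : E →ₗ[ℝ] EuclideanSpace ℝ (Fin k) :=
  (WithLp.linearEquiv 2 ℝ (Fin k → ℝ)).symm.toLinearMap ∘ₗ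
    LinearMap.pi fun m => (r m)⁻¹ • innerₛₗ ℝ (g m)

@[simp]
theorem scaledCoords_apply (g : Fin k → E) (r : Fin k → ℝ) (x : E) (m : Fin k) :
    scaledCoords g r x m = ⟪g m, x⟫ / r m := by
  simp [scaledCoords, div_eq_inv_mul]

theorem norm_sq_scaledCoords (g : Fin k → E) (r : Fin k → ℝ) (x : E) :
    ‖scaledCoords g r x‖ ^ 2 = ∑ m, (⟪g m, x⟫ / r m) ^ 2 := by
  simp [EuclideanSpace.real_norm_sq_eq]

theorem latticeDet_scaledCoords {n : ℕ} {g w : Fin k → EuclideanSpace ℝ (Fin n)}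
    (hg : Orthonormal ℝ g) (hw : ∀ i, w i ∈ span ℝ (range g)) (r : Fin k → ℝ) :
    latticeDet (scaledCoords g r ∘ w) = latticeDet w / |∏ m, r m| := by
  have hmat : (Matrix.of fun i m => (scaledCoords g r ∘ w) i m) =
      Matrix.of (fun i m => ⟪g m, w i⟫) * Matrix.diagonal fun m => (r m)⁻¹ := by
    ext i m
    simp [div_eq_mul_inv]
  rw [latticeDet_eq_abs_det, hmat, Matrix.det_mul, Matrix.det_diagonal, abs_mul,
    latticeDet_eq_abs_det_inner hg hw, Finset.prod_inv_distrib, abs_inv, div_eq_mul_inv]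

end ScaledCoords

section Hermite

variable {k : ℕ}

theorem volume_fundamentalDomain_eq_latticeDet {B : Basis (Fin k) ℝ (EuclideanSpace ℝ (Fin k))} :
    volume.real (ZSpan.fundamentalDomain B) = latticeDet B := by
  set B₀ := (EuclideanSpace.basisFun (Fin k) ℝ).toBasis
  have hB₀ : volume.real (ZSpan.fundamentalDomain B₀) = 1 := by
    rw [measureReal_def, measure_congr (ZSpan.fundamentalDomain_ae_parallelepiped B₀ volume),
      OrthonormalBasis.coe_toBasis, OrthonormalBasis.volume_parallelepiped, ENNReal.toReal_one]
  rw [ZSpan.measureReal_fundamentalDomain B volume B₀, hB₀, mul_one, latticeDet_eq_abs_det,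
    Basis.det_apply, ← Matrix.det_transpose]
  rfl

theorem succMin_one_pow_mul_volume_ball_le (hk : 0 < k)
    {d : Fin k → EuclideanSpace ℝ (Fin k)} (hd : LinearIndependent ℝ d) :
    succMin d 1 ^ k * volume.real (Metric.ball (0 : EuclideanSpace ℝ (Fin k)) 1) ≤
      2 ^ k * latticeDet d := by
  have : Nonempty (Fin k) := Fin.pos_iff_nonempty.mp hk
  set B := basisOfLinearIndependentOfCardEqFinrank hd (by simp)
  have hB : ⇑B = d := coe_basisOfLinearIndependentOfCardEqFinrank hd _
  have hball : volume (Metric.ball (0 : EuclideanSpace ℝ (Fin k)) (succMin d 1)) ≤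
      volume (ZSpan.fundamentalDomain B) * 2 ^ k := by
    by_contra! h
    have : Countable (span ℤ (range B)).toAddSubgroup := inferInstanceAs (Countable (span ℤ _))
    obtain ⟨x, hx0, hx⟩ := exists_ne_zero_mem_lattice_of_measure_mul_two_pow_lt_measure
      (ZSpan.isAddFundamentalDomain' B volume) (fun y hy => by simpa using hy)
      (convex_ball 0 _) (by rwa [finrank_euclideanSpace_fin])
    have hxL : (x : EuclideanSpace ℝ (Fin k)) ∈ span ℤ (range d) := hB ▸ x.2
    exact (succMin_one_le_norm hxL (by simpa using hx0)).not_gt (mem_ball_zero_iff.mp hx)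
  have := ENNReal.toReal_mono
    (ENNReal.mul_ne_top (ZSpan.fundamentalDomain_isBounded B).measure_lt_top.ne (by simp)) hball
  rw [Measure.addHaar_ball volume 0 (succMin_nonneg 1), finrank_euclideanSpace_fin] at this
  simp [← measureReal_def, volume_fundamentalDomain_eq_latticeDet, hB,
    ENNReal.toReal_ofReal (pow_nonneg (succMin_nonneg 1) k)] at this
  linarith

theorem bddAbove_hermiteConstant_set (hk : 0 < k) :
    BddAbove {r : ℝ | ∃ d : Fin k → EuclideanSpace ℝ (Fin k), LinearIndependent ℝ d ∧
      r = succMin d 1 ^ 2 / latticeDet d ^ ((2 : ℝ) / k)} := by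
  set V := volume.real (Metric.ball (0 : EuclideanSpace ℝ (Fin k)) 1)
  have hV : 0 < V := ENNReal.toReal_pos (Metric.measure_ball_pos volume 0 one_pos).ne'
    measure_ball_lt_top.ne
  refine ⟨(2 ^ k / V) ^ ((2 : ℝ) / k), ?_⟩
  rintro _ ⟨d, hd, rfl⟩
  have hD := latticeDet_pos hd
  have hmink : succMin d 1 ^ k ≤ 2 ^ k / V * latticeDet d := by
    rw [div_mul_eq_mul_div, le_div_iff₀ hV]
    exact succMin_one_pow_mul_volume_ball_le hk hd
  rw [div_le_iff₀ (by positivity)]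
  calc succMin d 1 ^ 2 = (succMin d 1 ^ k) ^ ((2 : ℝ) / k) := by
        rw [← Real.rpow_natCast (succMin d 1) k, ← Real.rpow_mul (succMin_nonneg 1),
          mul_div_cancel₀ _ (by positivity), Real.rpow_two]
    _ ≤ (2 ^ k / V * latticeDet d) ^ ((2 : ℝ) / k) := by
        gcongr
        exact pow_nonneg (succMin_nonneg 1) k
    _ = (2 ^ k / V) ^ ((2 : ℝ) / k) * latticeDet d ^ ((2 : ℝ) / k) :=
        Real.mul_rpow (by positivity) hD.le

theorem sq_succMin_one_le_hermiteConstant_mul (hk : 0 < k)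
    {d : Fin k → EuclideanSpace ℝ (Fin k)} (hd : LinearIndependent ℝ d) :
    succMin d 1 ^ 2 ≤ hermiteConstant k * latticeDet d ^ ((2 : ℝ) / k) := by
  have := latticeDet_pos hd
  rw [← div_le_iff₀ (by positivity)]
  exact le_csSup (bddAbove_hermiteConstant_set hk) ⟨d, hd, rfl⟩

end Hermite

theorem le_rpow_mul_of_one_le_mul_rpow {γ P D : ℝ} {k : ℕ} (hk : 0 < k) (hP : 0 < P)
    (hD : 0 < D) (h : 1 ≤ γ * (D / P) ^ ((2 : ℝ) / k)) : P ≤ γ ^ ((k : ℝ) / 2) * D := by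
  have ht : 0 < (D / P) ^ ((2 : ℝ) / k) := by positivity
  have h₁ : (P / D) ^ ((2 : ℝ) / k) ≤ γ := by
    rw [← inv_div, Real.inv_rpow (by positivity), ← one_div, div_le_iff₀ ht]
    exact h
  rw [← div_le_iff₀ hD]
  calc P / D = ((P / D) ^ ((2 : ℝ) / k)) ^ ((k : ℝ) / 2) := by
        rw [← Real.rpow_mul (by positivity), div_mul_div_cancel₀' two_ne_zero,
          div_self (by positivity), Real.rpow_one]
    _ ≤ γ ^ ((k : ℝ) / 2) := by gcongr

theorem IsSuccMinFamily.prod_norm_le {n k : ℕ} (hk : 0 < k)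
    {b u : Fin k → EuclideanSpace ℝ (Fin n)} (hb : LinearIndependent ℝ b)
    (hu : IsSuccMinFamily (span ℤ (range b)) u) :
    ∏ i, ‖u i‖ ≤ hermiteConstant k ^ ((k : ℝ) / 2) * latticeDet b := by
  set f := scaledCoords (gramSchmidtNormed ℝ u) fun m => ‖u m‖
  have hspan : span ℝ (range u) = span ℝ (range b) := by
    refine eq_of_le_of_finrank_le (span_le.mpr ?_) ?_
    · rintro _ ⟨i, rfl⟩
      exact span_subset_span ℤ ℝ _ (hu.mem i)
    · rw [finrank_span_eq_card hb, finrank_span_eq_card hu.linearIndependent]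
  have hbg : ∀ i, b i ∈ span ℝ (range (gramSchmidtNormed ℝ u)) := fun i => by
    rw [span_gramSchmidtNormed_range, span_gramSchmidt, hspan]
    exact subset_span (mem_range_self i)
  have hP : 0 < ∏ i, ‖u i‖ := Finset.prod_pos fun i _ => hu.norm_pos i
  have hD := latticeDet_pos hb
  have hdet : latticeDet (f ∘ b) = latticeDet b / ∏ i, ‖u i‖ := by
    rw [latticeDet_scaledCoords (gramSchmidtNormed_orthonormal hu.linearIndependent) hbg,
      abs_of_pos hP]
  have hc : LinearIndependent ℝ (f ∘ b) :=
    linearIndependent_of_latticeDet_pos (hdet ▸ div_pos hD hP)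
  have hmin : 1 ≤ succMin (f ∘ b) 1 := by
    refine le_succMin_one hk hc fun y hy hy0 => ?_
    obtain ⟨x, hx, rfl⟩ : y ∈ (span ℤ (range b)).map (f.restrictScalars ℤ) := by
      rwa [map_span, LinearMap.coe_restrictScalars, ← range_comp]
    have hx0 : x ≠ 0 := by rintro rfl; simp at hy0
    have := hu.one_le_sum_sq hx (hspan ▸ span_subset_span ℤ ℝ _ hx) hx0
    rw [← norm_sq_scaledCoords] at this
    exact one_le_sq_iff_one_le_abs _ |>.mp this |>.trans_eq (abs_norm _)
  have hγ := (one_le_pow₀ hmin).trans (sq_succMin_one_le_hermiteConstant_mul hk hc)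
  rw [hdet] at hγ
  exact le_rpow_mul_of_one_le_mul_rpow hk hP hD hγ

/-- Minkowski's second theorem for balls, (8):
`det(L) ≤ ∏_{i=1}^k λ_i(B, L) ≤ γ_k^{k/2} det(L)`. -/
theorem det_le_prod_succMin_le {n k : ℕ} (hk : 0 < k)
    (b : Fin k → EuclideanSpace ℝ (Fin n)) (hb : LinearIndependent ℝ b) :
    latticeDet b ≤ (∏ i : Fin k, succMin b ((i : ℕ) + 1)) ∧
    (∏ i : Fin k, succMin b ((i : ℕ) + 1)) ≤
      hermiteConstant k ^ ((k : ℝ) / 2) * latticeDet b := by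
  obtain ⟨u, hu⟩ := exists_isSuccMinFamily hb
  have hprod : ∏ i : Fin k, succMin b ((i : ℕ) + 1) = ∏ i, ‖u i‖ :=
    Finset.prod_congr rfl fun i _ => hu.succMin_eq i
  rw [hprod]
  exact ⟨(latticeDet_le_of_mem_span_int hu.linearIndependent hu.mem).trans
    (latticeDet_le_prod_norm hu.linearIndependent), hu.prod_norm_le hk hb⟩
end
end

section
/- Let A ∈ ℤ^{m×n} (1 ≤ m < n) satisfy: gcd of all m×m minors of A is 1, and {x ∈ ℝⁿ_{≥0} : Ax = 0} = {0}. Let v be the sum of the columns of A and C the cone generated by the columns. If b ∈ (2^{(n−m)/2−1} p(m,n) √(det(A Aᵀ)) · v + C) ∩ ℤ^m, where p(m,n) = ((n−m)n/2)^{1/2}, then P(A,b) = {x ∈ ℝⁿ_{≥0} : Ax = b} contains an integer point. -/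
noncomputable section

open scoped BigOperators RealInnerProductSpace Pointwise

/-!
Choose columns `g` of `A` with `δ = det A_g ≠ 0`, possible since the maximal minors have gcd `1`.
For every other column `j`, the cofactor vector `k_j = δ e_j - adj(A_g) A_j` (placed on `g`) is an
integral kernel vector of `A` that vanishes on the other non-basic columns. By Cramer's rule its
entries are `0` or `±` maximal minors, and `(det A_g)² ≤ det(A Aᵀ)` because
`A Aᵀ = A_g A_gᵀ + (positive semidefinite)`. Take an integral solution `u` of `A x = b` and a real
solution `c` with all coordinates at least `t` (from the translated cone). Write
`u - c = ∑_j α_j k_j` and subtract `∑_j round(α_j) k_j` from `u`. The result is an integral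
solution within `(n - m)/2 · √det(A Aᵀ)` of `c` in every coordinate, and `t` exceeds that distance.
-/

namespace Matrix

variable {m n R : Type*} [Fintype m] [CommRing R]

lemma injective_of_det_submatrix_ne_zero [DecidableEq m] {A : Matrix m n R} {g : m → n}
    (hB : (A.submatrix id g).det ≠ 0) : Function.Injective g := fun i j hij => by
  by_contra hne
  exact hB (det_zero_of_column_eq hne fun k => by simp [hij])

lemma one_le_det_one_add_s12 [DecidableEq m] {S : Matrix m m ℝ} (hS : S.PosSemidef) :
    1 ≤ (1 + S).det := by
  have hH : (1 + S).IsHermitian := isHermitian_one.add hS.1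
  rw [hH.det_eq_prod_eigenvalues]
  refine Finset.one_le_prod fun i _ => ?_
  set v := hH.eigenvectorBasis i
  have hv : star v.ofLp ⬝ᵥ v.ofLp = 1 := by
    rw [dotProduct_comm, ← EuclideanSpace.inner_eq_star_dotProduct, real_inner_self_eq_norm_sq,
      hH.eigenvectorBasis.orthonormal.1 i, one_pow]
  have := hS.re_dotProduct_nonneg v.ofLp
  rw [RCLike.ofReal_real_eq_id, id, hH.eigenvalues_eq, add_mulVec, one_mulVec, dotProduct_add, hv]
  simpa using this

lemma det_mul_transpose_le_det_add [DecidableEq m] (B : Matrix m m ℝ) {P : Matrix m m ℝ}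
    (hP : P.PosSemidef) : (B * Bᵀ).det ≤ (B * Bᵀ + P).det := by
  by_cases hB : B.det = 0
  · have hsum := (posSemidef_self_mul_conjTranspose B).add hP
    rw [conjTranspose_eq_transpose_of_trivial] at hsum
    simpa [det_mul, hB] using hsum.det_nonneg
  · have hU : IsUnit B.det := isUnit_iff_ne_zero.2 hB
    have hconj := hP.mul_mul_conjTranspose_same B⁻¹
    rw [conjTranspose_eq_transpose_of_trivial] at hconj
    have hfactor : B * Bᵀ + P = B * (1 + B⁻¹ * P * B⁻¹ᵀ) * Bᵀ := by
      rw [mul_add, add_mul, mul_one, show B * (B⁻¹ * P * B⁻¹ᵀ) * Bᵀ = B * B⁻¹ * P * (B * B⁻¹)ᵀ by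
        simp only [transpose_mul, Matrix.mul_assoc], mul_nonsing_inv _ hU, transpose_one, one_mul,
        mul_one]
    rw [hfactor, det_mul, det_mul, det_mul, det_transpose]
    nlinarith [one_le_det_one_add_s12 hconj, sq_nonneg B.det]

lemma abs_det_submatrix_le_sqrt_det_mul_transpose [DecidableEq m] [Fintype n] [DecidableEq n]
    (A : Matrix m n ℝ) (g : m → n) : |(A.submatrix id g).det| ≤ √(A * Aᵀ).det := by
  refine Real.abs_le_sqrt ?_
  by_cases hg : Function.Injective g
  · set s := Finset.univ.image g
    have hD : (diagonal fun k => if k ∈ s then (0 : ℝ) else 1).PosSemidef :=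
      PosSemidef.diagonal fun k => by dsimp only; split_ifs <;> norm_num
    -- `A Aᵀ = ∑_k A_k A_kᵀ`, split into the columns selected by `g` and the others
    have hsplit : A * Aᵀ = A.submatrix id g * (A.submatrix id g)ᵀ +
        A * diagonal (fun k => if k ∈ s then (0 : ℝ) else 1) * Aᵀ := by
      ext r r'
      simp only [add_apply, mul_apply, transpose_apply, submatrix_apply, id_eq, diagonal_apply,
        mul_ite, mul_zero, Finset.sum_ite_eq', Finset.mem_univ, if_true]
      rw [← Finset.sum_add_sum_compl s, Finset.sum_image hg.injOn]
      simp [Finset.sum_ite, Finset.filter_not, Finset.compl_eq_univ_sdiff]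
    have := det_mul_transpose_le_det_add (A.submatrix id g) (hD.mul_mul_conjTranspose_same A)
    rw [conjTranspose_eq_transpose_of_trivial, ← hsplit, det_mul, det_transpose] at this
    simpa [sq] using this
  · obtain ⟨i, j, hij, hne⟩ : ∃ i j, g i = g j ∧ i ≠ j := by
      simpa [Function.Injective] using hg
    rw [det_zero_of_column_eq hne fun k => by simp [hij]]
    have := (posSemidef_self_mul_conjTranspose A).det_nonneg
    rw [conjTranspose_eq_transpose_of_trivial] at this
    simpa using this

lemma det_submatrix_smul_mem_range_mulVecLin [DecidableEq m] [Fintype n] [DecidableEq n]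
    (A : Matrix m n R) (g : m → n) (y : m → R) :
    (A.submatrix id g).det • y ∈ LinearMap.range A.mulVecLin :=
  ⟨(1 : Matrix n n R).submatrix id g *ᵥ ((A.submatrix id g).adjugate *ᵥ y), by
    rw [mulVecLin_apply, mulVec_mulVec]
    have := mul_submatrix_one (Equiv.refl n) g A
    simp only [Equiv.coe_refl, Equiv.refl_symm, Function.id_comp] at this
    rw [this, mulVec_mulVec, mul_adjugate, smul_mulVec, one_mulVec]⟩

lemma intCast_det_mul_transpose [DecidableEq m] [Fintype n] (A : Matrix m n ℤ) :
    (((A * Aᵀ).det : ℤ) : R) = (A.map (Int.cast : ℤ → R) * (A.map (Int.cast : ℤ → R))ᵀ).det := by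
  rw [← eq_intCast (Int.castRingHom R), RingHom.map_det, RingHom.mapMatrix_apply, Matrix.map_mul,
    ← transpose_map]
  rfl

lemma mulVec_extend_zero [Fintype n] (A : Matrix m n R) {g : m → n} (hg : Function.Injective g)
    (w : m → R) : A *ᵥ Function.extend g w 0 = A.submatrix id g *ᵥ w := by
  classical
  ext r
  simp only [mulVec, dotProduct, submatrix_apply, id_eq]
  rw [← Finset.sum_subset (Finset.subset_univ (Finset.univ.image g)), Finset.sum_image hg.injOn]
  · simp [hg.extend_apply]
  · intro c _ hc
    rw [Function.extend_apply' _ _ _ (by simpa using hc)]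
    simp

lemma eq_zero_of_mulVec_eq_zero_of_forall_notMem_range [DecidableEq m] [Fintype n] [IsDomain R]
    {A : Matrix m n R} {g : m → n} (hB : (A.submatrix id g).det ≠ 0) {w : n → R}
    (hw : A *ᵥ w = 0) (hoff : ∀ c ∉ Set.range g, w c = 0) : w = 0 := by
  have hg := injective_of_det_submatrix_ne_zero hB
  have hext : Function.extend g (w ∘ g) 0 = w := by
    ext c
    by_cases hc : c ∈ Set.range g
    · obtain ⟨i, rfl⟩ := hc
      exact hg.extend_apply _ _ i
    · rw [Function.extend_apply' _ _ _ hc, hoff c hc, Pi.zero_apply]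
  rw [← hext, mulVec_extend_zero A hg] at hw
  rw [← hext, eq_zero_of_mulVec_eq_zero hB hw, Function.extend_zero]

variable [DecidableEq m] [DecidableEq n]

def kernelVec (A : Matrix m n R) (g : m → n) (j : n) : n → R :=
  (A.submatrix id g).det • Pi.single j 1 -
    Function.extend g ((A.submatrix id g).adjugate *ᵥ A.col j) 0

variable {A : Matrix m n R} {g : m → n} {j : n}

lemma mulVec_kernelVec [Fintype n] (hg : Function.Injective g) : A *ᵥ kernelVec A g j = 0 := by
  rw [kernelVec, mulVec_sub, mulVec_extend_zero A hg, mulVec_mulVec, mul_adjugate, smul_mulVec,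
    one_mulVec, mulVec_smul, mulVec_single_one, sub_self]

lemma kernelVec_self (hj : j ∉ Set.range g) : kernelVec A g j j = (A.submatrix id g).det := by
  simp [kernelVec, Function.extend_apply' _ _ _ hj]

lemma kernelVec_of_notMem_range {c : n} (hc : c ∉ Set.range g) (hcj : c ≠ j) :
    kernelVec A g j c = 0 := by
  simp [kernelVec, Function.extend_apply' _ _ _ hc, hcj]

lemma kernelVec_apply_comp (hg : Function.Injective g) (hj : j ∉ Set.range g) (i : m) :
    kernelVec A g j (g i) = -(A.submatrix id (Function.update g i j)).det := by
  have hne : g i ≠ j := fun h => hj ⟨i, h⟩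
  have hcol : (A.submatrix id g).updateCol i (A.col j) =
      A.submatrix id (Function.update g i j) := by
    ext r k
    by_cases hk : k = i
    · subst hk; simp
    · simp [hk]
  simp [kernelVec, hg.extend_apply, ← cramer_eq_adjugate_mulVec, cramer_apply, hcol, hne]

lemma abs_kernelVec_le [LinearOrder R] [IsStrictOrderedRing R] (hg : Function.Injective g)
    (hj : j ∉ Set.range g) {M : R} (hM : ∀ h : m → n, |(A.submatrix id h).det| ≤ M) (c : n) :
    |kernelVec A g j c| ≤ M := by
  by_cases hcj : c = j
  · rw [hcj, kernelVec_self hj]; exact hM g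
  by_cases hc : c ∈ Set.range g
  · obtain ⟨i, rfl⟩ := hc
    rw [kernelVec_apply_comp hg hj, abs_neg]; exact hM _
  · rw [kernelVec_of_notMem_range hc hcj, abs_zero]; exact (abs_nonneg _).trans (hM g)

lemma kernelVec_map {S : Type*} [CommRing S] (f : R →+* S) :
    kernelVec (A.map f) g j = f ∘ kernelVec A g j := by
  have hadj : f ∘ ((A.submatrix id g).adjugate *ᵥ A.col j) =
      ((A.map f).submatrix id g).adjugate *ᵥ (A.map f).col j := by
    ext i
    rw [Function.comp_apply, RingHom.map_mulVec, ← RingHom.mapMatrix_apply, RingHom.map_adjugate]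
    rfl
  ext c
  rw [Function.comp_apply, kernelVec, kernelVec, Pi.sub_apply, Pi.sub_apply, map_sub,
    Function.apply_extend f, hadj, Pi.smul_apply, Pi.smul_apply, smul_eq_mul, smul_eq_mul, map_mul,
    RingHom.map_det]
  simp [Pi.single_apply, apply_ite f, submatrix_map]

lemma sum_smul_kernelVec_eq [Fintype n] {K : Type*} [Field K] {A : Matrix m n K} {g : m → n}
    (hB : (A.submatrix id g).det ≠ 0) {w : n → K} (hw : A *ᵥ w = 0) :
    ∑ j ∈ (Finset.univ.image g)ᶜ, (w j / (A.submatrix id g).det) • kernelVec A g j = w := by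
  have hg := injective_of_det_submatrix_ne_zero hB
  refine (sub_eq_zero.1 <|
    eq_zero_of_mulVec_eq_zero_of_forall_notMem_range hB ?_ fun c hc => ?_).symm
  · simp [mulVec_sub, mulVec_sum, mulVec_smul, mulVec_kernelVec hg, hw]
  · rw [Pi.sub_apply, Finset.sum_apply, Finset.sum_eq_single_of_mem c (by simpa using hc)]
    · simp [kernelVec_self hc, hB]
    · intro j _ hjc
      simp [kernelVec_of_notMem_range hc (Ne.symm hjc)]

end Matrix

open Matrix in
theorem exists_int_mulVec_eq_abs_sub_le {m n : Type*} [Fintype m] [DecidableEq m] [Fintype n]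
    [DecidableEq n] (A : Matrix m n ℤ) {g : m → n} (hg : (A.submatrix id g).det ≠ 0) {M : ℝ}
    (hM : ∀ h : m → n, |((A.map (Int.cast : ℤ → ℝ)).submatrix id h).det| ≤ M)
    (u : n → ℤ) (c : n → ℝ) (hc : A.map (Int.cast : ℤ → ℝ) *ᵥ c = Int.cast ∘ (A *ᵥ u)) :
    ∃ x : n → ℤ, A *ᵥ x = A *ᵥ u ∧
      ∀ i, |(x i : ℝ) - c i| ≤ (Fintype.card n - Fintype.card m) * M / 2 := by
  set Aℝ := A.map (Int.cast : ℤ → ℝ)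
  have hinj := injective_of_det_submatrix_ne_zero hg
  have hgℝ : (Aℝ.submatrix id g).det ≠ 0 := by
    rw [show Aℝ.submatrix id g = (A.submatrix id g).map Int.cast from rfl, ← Int.cast_det]
    exact_mod_cast hg
  set N := (Finset.univ.image g)ᶜ
  set α : n → ℝ := fun j => ((u j : ℝ) - c j) / (Aℝ.submatrix id g).det
  have hcast : ∀ j, kernelVec Aℝ g j = Int.cast ∘ kernelVec A g j := fun j =>
    kernelVec_map (Int.castRingHom ℝ)
  have hw : Aℝ *ᵥ (Int.cast ∘ u - c) = 0 := by
    rw [mulVec_sub, hc, sub_eq_zero]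
    exact funext fun r => (RingHom.map_mulVec (Int.castRingHom ℝ) A u r).symm
  have hdecomp := sum_smul_kernelVec_eq hgℝ hw
  refine ⟨u - ∑ j ∈ N, round (α j) • kernelVec A g j, ?_, fun i => ?_⟩
  · rw [mulVec_sub, mulVec_sum, Finset.sum_eq_zero fun j _ => by
      rw [mulVec_smul, mulVec_kernelVec hinj, smul_zero], sub_zero]
  · have hxc : ((u - ∑ j ∈ N, round (α j) • kernelVec A g j) i : ℝ) - c i =
        ∑ j ∈ N, (α j - round (α j)) * kernelVec Aℝ g j i := by
      have hi := congrFun hdecomp i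
      simp only [hcast, Function.comp_apply, Pi.sub_apply, Finset.sum_apply, Pi.smul_apply,
        smul_eq_mul, Int.cast_sub, Int.cast_sum, Int.cast_mul, sub_mul,
        Finset.sum_sub_distrib] at hi ⊢
      linarith
    have hcard : (N.card : ℝ) = Fintype.card n - Fintype.card m := by
      rw [Finset.card_compl, Finset.card_image_of_injective _ hinj, Finset.card_univ,
        Nat.cast_sub (Fintype.card_le_of_injective g hinj)]
    calc _ = |∑ j ∈ N, (α j - round (α j)) * kernelVec Aℝ g j i| := by rw [hxc]
      _ ≤ ∑ j ∈ N, 1 / 2 * M := by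
        refine (Finset.abs_sum_le_sum_abs _ _).trans (Finset.sum_le_sum fun j hj => ?_)
        rw [abs_mul]
        exact mul_le_mul (abs_sub_round _) (abs_kernelVec_le hinj (by simpa [N] using hj) hM i)
          (abs_nonneg _) (by norm_num)
      _ = _ := by rw [Finset.sum_const, nsmul_eq_mul, hcard]; ring

open Matrix in
lemma exists_mulVec_eq_of_sub_smul_colSum_mem_colCone {m n : ℕ} {A : Matrix (Fin m) (Fin n) ℤ}
    {y : Fin m → ℝ} {t : ℝ} (h : y - t • colSum A ∈ colCone A) :
    ∃ c : Fin n → ℝ, A.map (Int.cast : ℤ → ℝ) *ᵥ c = y ∧ ∀ i, t ≤ c i := by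
  obtain ⟨μ, hμ, hy⟩ := h
  refine ⟨fun i => t + μ i, funext fun r => ?_, fun i => le_add_of_nonneg_right (hμ i)⟩
  have hr := congrFun hy r
  simp only [Pi.sub_apply, Pi.smul_apply, smul_eq_mul, Finset.sum_apply, colSum] at hr
  simp only [mulVec, dotProduct, map_apply, mul_add, Finset.sum_add_distrib]
  rw [← Finset.sum_mul, Finset.sum_congr rfl fun i _ => mul_comm (A r i : ℝ) (μ i)]
  linarith

lemma range_mulVecLin_eq_top_of_minorGcd_eq_one {m n : ℕ} {A : Matrix (Fin m) (Fin n) ℤ}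
    (h : minorGcd A = 1) : LinearMap.range A.mulVecLin = ⊤ := by
  obtain ⟨a, ha⟩ := Finset.gcd_eq_sum_mul (Finset.univ.filter fun s : Finset (Fin n) => s.card = m)
    fun s => if hs : s.card = m then
      (A.submatrix id fun j => ((s.orderIsoOfFin hs) j : Fin n)).det else 0
  rw [← minorGcd, h] at ha
  refine Submodule.eq_top_iff'.2 fun y => ?_
  rw [← one_smul ℤ y, ha, Finset.sum_smul]
  refine Submodule.sum_mem _ fun s _ => ?_
  rw [mul_comm, mul_smul]
  refine Submodule.smul_mem _ _ ?_
  split_ifs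
  · exact Matrix.det_submatrix_smul_mem_range_mulVecLin A _ y
  · rw [zero_smul]; exact Submodule.zero_mem _

lemma exists_det_submatrix_ne_zero_of_minorGcd_ne_zero {m n : ℕ} {A : Matrix (Fin m) (Fin n) ℤ}
    (h : minorGcd A ≠ 0) : ∃ g : Fin m → Fin n, (A.submatrix id g).det ≠ 0 := by
  obtain ⟨s, hs, hne⟩ := not_forall₂.1 (mt Finset.gcd_eq_zero_iff.2 h)
  have hcard := (Finset.mem_filter.1 hs).2
  rw [dif_pos hcard] at hne
  exact ⟨_, hne⟩

lemma half_le_two_rpow_mul_sqrt {K N : ℝ} (hK : 1 ≤ K) (hKN : K ≤ N) :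
    K / 2 ≤ 2 ^ (K / 2 - 1) * √(K * N / 2) := by
  have hpow : (√2)⁻¹ ≤ (2 : ℝ) ^ (K / 2 - 1) := by
    rw [Real.sqrt_eq_rpow, ← Real.rpow_neg zero_le_two]
    exact Real.rpow_le_rpow_of_exponent_le one_le_two (by linarith)
  have hsqrt : K / √2 ≤ √(K * N / 2) :=
    calc K / √2 = √(K * K / 2) := by
          rw [Real.sqrt_div' _ zero_le_two, Real.sqrt_mul_self (by linarith)]
      _ ≤ √(K * N / 2) := Real.sqrt_le_sqrt (by nlinarith)
  calc K / 2 = (√2)⁻¹ * (K / √2) := by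
        field_simp; rw [Real.sq_sqrt zero_le_two]
    _ ≤ 2 ^ (K / 2 - 1) * √(K * N / 2) := by gcongr

theorem knapsack_feasible_in_translated_cone_general {m n : ℕ} (hmn : m < n)
    (A : Matrix (Fin m) (Fin n) ℤ) (hgcd : minorGcd A = 1)
    (b : Fin m → ℤ)
    (hb : (fun r => (b r : ℝ)) -
        ((2 : ℝ) ^ (((n : ℝ) - m) / 2 - 1) * Real.sqrt (((n : ℝ) - m) * n / 2) *
          Real.sqrt (((A * A.transpose).det : ℤ) : ℝ)) • colSum A ∈ colCone A) :
    ∃ x : Fin n → ℤ, (∀ i, 0 ≤ x i) ∧ A.mulVec x = b := by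
  obtain ⟨c, hc, htc⟩ := exists_mulVec_eq_of_sub_smul_colSum_mem_colCone hb
  obtain ⟨u, rfl⟩ : ∃ u, A.mulVecLin u = b :=
    (range_mulVecLin_eq_top_of_minorGcd_eq_one hgcd).ge Submodule.mem_top
  obtain ⟨g, hg⟩ := exists_det_submatrix_ne_zero_of_minorGcd_ne_zero (hgcd ▸ one_ne_zero)
  have hM (h : Fin m → Fin n) :
      |((A.map (Int.cast : ℤ → ℝ)).submatrix id h).det| ≤ √(((A * A.transpose).det : ℤ) : ℝ) := by
    rw [Matrix.intCast_det_mul_transpose]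
    exact Matrix.abs_det_submatrix_le_sqrt_det_mul_transpose _ h
  obtain ⟨x, hx, hxc⟩ := exists_int_mulVec_eq_abs_sub_le A hg hM u c hc
  refine ⟨x, fun i => ?_, hx⟩
  have hmn' : (m : ℝ) + 1 ≤ n := by exact_mod_cast hmn
  have ht := half_le_two_rpow_mul_sqrt (K := (n : ℝ) - m) (N := n) (by linarith) (by linarith)
  have hxi := (abs_le.1 (hxc i)).1
  simp only [Fintype.card_fin] at hxi
  have hci := htc i
  have hdist := mul_le_mul_of_nonneg_right ht (Real.sqrt_nonneg (((A * A.transpose).det : ℤ) : ℝ))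
  exact_mod_cast (by linarith : (0 : ℝ) ≤ x i)

/-- Theorem 1, existence part: if
`b ∈ (2^{(n−m)/2−1} p(m,n) √(det A Aᵀ) · v + C) ∩ ℤ^m`, then `P(A, b)` contains an
integer point. -/
theorem knapsack_feasible_in_translated_cone {m n : ℕ} (hm : 1 ≤ m) (hmn : m < n)
    (A : Matrix (Fin m) (Fin n) ℤ) (hgcd : minorGcd A = 1)
    (hpos : ∀ x : Fin n → ℝ, (∀ j, 0 ≤ x j) →
      (A.map (Int.cast : ℤ → ℝ)).mulVec x = 0 → x = 0)
    (b : Fin m → ℤ)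
    (hb : (fun r => (b r : ℝ)) -
        ((2 : ℝ) ^ (((n : ℝ) - m) / 2 - 1) * Real.sqrt (((n : ℝ) - m) * n / 2) *
          Real.sqrt (((A * A.transpose).det : ℤ) : ℝ)) • colSum A ∈ colCone A) :
    ∃ x : Fin n → ℤ, (∀ i, 0 ≤ x i) ∧ A.mulVec x = b :=
  knapsack_feasible_in_translated_cone_general hmn A hgcd b hb
end
end

section
/- Let L ⊂ ℤⁿ be a k-dimensional lattice. Then there exist linearly independent vectors x₁, …, x_k ∈ L with ‖x_i‖_∞ ≤ det(L) for all i, where ‖·‖_∞ is the maximum norm. -/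
noncomputable section

open scoped BigOperators RealInnerProductSpace Pointwise

/-! Write the lattice basis as the rows of an integer `k × n` matrix `B` and choose `k` columns
`c` on which `B` has a nonsingular minor `N`. The rows of `adj(N) * B` are integer combinations
of the basis, they are linearly independent because on the columns `c` they form `det N • 1`,
and by Cramer's rule each of their entries is a `k × k` minor of `B`. By the Cauchy–Binet
formula every such minor is at most `√det(B Bᵀ) = det(L)` in absolute value. -/

namespace Matrix

open Finset Equiv

section CauchyBinet

variable {m n R : Type*} [Fintype m] [DecidableEq m] [Fintype n] [CommRing R]

theorem det_mul_eq_sum_det_submatrix_mul_prod (A : Matrix m n R) (B : Matrix n m R) :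
    (A * B).det = ∑ p : m → n, (A.submatrix id p).det * ∏ i, B (p i) i := by
  simp only [det_apply', mul_apply, prod_univ_sum, mul_sum, Fintype.piFinset_univ, sum_mul,
    prod_mul_distrib, submatrix_apply, id, mul_assoc]
  exact Finset.sum_comm

/-- The Cauchy–Binet formula, summed over all column maps `p` instead of `card m`-subsets of
columns: every subset occurs once for each of its `(card m)!` orderings. -/
theorem factorial_card_mul_det_mul (A : Matrix m n R) (B : Matrix n m R) :
    ((Fintype.card m).factorial : R) * (A * B).det =
      ∑ p : m → n, (A.submatrix id p).det * (B.submatrix p id).det := by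
  have reindex (τ : Perm m) : (A * B).det =
      ∑ p : m → n, (A.submatrix id p).det * (Perm.sign τ * ∏ i, B (p (τ i)) i) := by
    rw [det_mul_eq_sum_det_submatrix_mul_prod,
      ← (Equiv.arrowCongr τ (Equiv.refl n)).symm.sum_comp]
    refine Fintype.sum_congr _ _ fun p => ?_
    change ((A.submatrix id p).submatrix id τ).det * _ = _
    rw [det_permute']
    simp only [arrowCongr_symm, arrowCongr_apply, Equiv.refl_symm, symm_symm, coe_refl,
      Function.comp_apply, id]
    ring
  calc ((Fintype.card m).factorial : R) * (A * B).det
      = ∑ τ : Perm m, (A * B).det := by simp [Fintype.card_perm]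
    _ = ∑ p : m → n, (A.submatrix id p).det *
          ∑ τ : Perm m, Perm.sign τ * ∏ i, B (p (τ i)) i := by
      simp only [mul_sum]
      rw [Finset.sum_comm]
      exact Fintype.sum_congr _ _ reindex
    _ = _ := by simp only [det_apply', submatrix_apply, id]

theorem sq_det_submatrix_le_det_mul_transpose [LinearOrder R] [IsStrictOrderedRing R]
    (A : Matrix m n R) (c : m → n) : (A.submatrix id c).det ^ 2 ≤ (A * Aᵀ).det := by
  have sum_sq : ((Fintype.card m).factorial : R) * (A * Aᵀ).det =
      ∑ p : m → n, (A.submatrix id p).det ^ 2 := by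
    rw [factorial_card_mul_det_mul]
    exact Fintype.sum_congr _ _ fun p => by rw [← det_transpose (A.submatrix id p), sq]; rfl
  suffices ((Fintype.card m).factorial : R) * (A.submatrix id c).det ^ 2 ≤
      ∑ p : m → n, (A.submatrix id p).det ^ 2 from
    le_of_mul_le_mul_left (sum_sq ▸ this) (mod_cast (Fintype.card m).factorial_pos)
  by_cases hc : Function.Injective c
  · have sq_det_comp (τ : Perm m) :
        (A.submatrix id (c ∘ τ)).det ^ 2 = (A.submatrix id c).det ^ 2 := by
      change ((A.submatrix id c).submatrix id τ).det ^ 2 = _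
      rw [det_permute', mul_pow, ← Int.cast_pow, ← Units.val_pow_eq_pow_val, Int.units_sq]
      simp
    let compEmb : Perm m ↪ (m → n) :=
      ⟨fun τ => c ∘ τ, fun _ _ h => Equiv.ext fun i => hc (congrFun h i)⟩
    calc ((Fintype.card m).factorial : R) * (A.submatrix id c).det ^ 2
        = ∑ τ : Perm m, (A.submatrix id (c ∘ τ)).det ^ 2 := by
          simp [sq_det_comp, Fintype.card_perm]
      _ = ∑ p ∈ univ.map compEmb, (A.submatrix id p).det ^ 2 :=
          (sum_map univ compEmb fun p => (A.submatrix id p).det ^ 2).symm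
      _ ≤ _ := sum_le_univ_sum_of_nonneg fun p => sq_nonneg _
  · obtain ⟨i, j, hij, hne⟩ : ∃ i j, c i = c j ∧ i ≠ j := by
      simpa [Function.Injective] using hc
    rw [det_zero_of_column_eq hne fun k => by simp [hij], sq, mul_zero, mul_zero]
    exact sum_nonneg fun p _ => sq_nonneg _

end CauchyBinet

variable {m n : Type*} [Fintype m] [DecidableEq m]

theorem adjugate_submatrix_mul_apply {R : Type*} [CommRing R] (A : Matrix m n R) (c : m → n)
    (i : m) (j : n) :
    ((A.submatrix id c).adjugate * A) i j = (A.submatrix id (Function.update c i j)).det := by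
  have cramer_col : ((A.submatrix id c).adjugate * A) i j =
      cramer (A.submatrix id c) (fun l => A l j) i := by
    rw [cramer_eq_adjugate_mulVec]
    rfl
  rw [cramer_col, cramer_apply]
  congr 1
  ext l l'
  rcases eq_or_ne l' i with rfl | h <;> simp [*]

variable {K : Type*} [Field K]

theorem linearIndependent_of_det_submatrix_ne_zero {A : Matrix m n K} {c : m → n}
    (hc : (A.submatrix id c).det ≠ 0) : LinearIndependent K A.row :=
  LinearIndependent.of_comp (LinearMap.funLeft K K c)
    (linearIndependent_rows_iff_isUnit.mpr ((isUnit_iff_isUnit_det _).mpr hc.isUnit))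

theorem exists_det_submatrix_ne_zero [Fintype n] {A : Matrix m n K}
    (hA : LinearIndependent K A.row) : ∃ c : m → n, (A.submatrix id c).det ≠ 0 := by
  obtain ⟨κ, a, ha, hspan, hind⟩ := exists_linearIndependent' K A.col
  have : Fintype κ := have := Finite.of_injective a ha; Fintype.ofFinite κ
  have card_eq : Fintype.card m = Fintype.card κ := by
    rw [← finrank_span_eq_card hA, ← rank_eq_finrank_span_row, rank_eq_finrank_span_cols,
      ← hspan, finrank_span_eq_card hind]
  let e := Fintype.equivOfCardEq card_eq
  refine ⟨a ∘ e, ((isUnit_iff_isUnit_det _).mp ?_).ne_zero⟩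
  exact linearIndependent_cols_iff_isUnit.mp (hind.comp e e.injective)

end Matrix

open Matrix

theorem latticeDet_eq_sqrt_det_mul_transpose {n k : ℕ}
    (b : Fin k → EuclideanSpace ℝ (Fin n)) :
    latticeDet b = √(of (fun i j => b i j) * (of fun i j => b i j)ᵀ).det := by
  rw [latticeDet]
  congr 2
  ext i j
  simp [PiLp.inner_apply, mul_apply, mul_comm]

/-- a `k`-dimensional lattice `L ⊂ ℤⁿ` contains `k` linearly independent
vectors with `‖x_i‖_∞ ≤ det(L)`. -/
theorem exists_linearIndependent_sup_norm_le_det {n k : ℕ}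
    (b : Fin k → EuclideanSpace ℝ (Fin n)) (hb : LinearIndependent ℝ b)
    (hint : ∀ i, IsIntegerVec (b i)) :
    ∃ x : Fin k → EuclideanSpace ℝ (Fin n), LinearIndependent ℝ x ∧
      (∀ i, x i ∈ Submodule.span ℤ (Set.range b)) ∧
      ∀ i j, |x i j| ≤ latticeDet b := by
  set M : Matrix (Fin k) (Fin n) ℝ := of fun i j => b i j
  choose B hB using hint
  have hBM : (of B).map ((↑) : ℤ → ℝ) = M := by ext i j; exact (hB i j).symm
  obtain ⟨c, hc⟩ := exists_det_submatrix_ne_zero (A := M)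
    (hb.map' (WithLp.linearEquiv 2 ℝ _).toLinearMap (LinearEquiv.ker _))
  set C := ((of B).submatrix id c).adjugate
  have hC : C.map ((↑) : ℤ → ℝ) = (M.submatrix id c).adjugate := by
    rw [← hBM]
    exact RingHom.map_adjugate (Int.castRingHom ℝ) _
  set x : Fin k → EuclideanSpace ℝ (Fin n) := fun i => ∑ l, C i l • b l
  have hx (i j) : x i j = ((M.submatrix id c).adjugate * M) i j := by
    simp [x, ← hC, mul_apply, M]
  refine ⟨x, ?_, fun i => Submodule.sum_mem _ fun l _ =>
    Submodule.smul_mem _ _ (Submodule.subset_span ⟨l, rfl⟩), fun i j => ?_⟩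
  · have rows_eq : (WithLp.linearEquiv 2 ℝ (Fin n → ℝ)).toLinearMap ∘ x =
        ((M.submatrix id c).adjugate * M).row := funext fun i => funext (hx i)
    refine .of_comp _ (rows_eq ▸ linearIndependent_of_det_submatrix_ne_zero (c := c) ?_)
    change ((M.submatrix id c).adjugate * M.submatrix id c).det ≠ 0
    rw [adjugate_mul, det_smul, det_one, mul_one]
    exact pow_ne_zero _ hc
  · rw [hx, adjugate_submatrix_mul_apply, latticeDet_eq_sqrt_det_mul_transpose,
      ← Real.sqrt_sq_eq_abs]
    exact Real.sqrt_le_sqrt (sq_det_submatrix_le_det_mul_transpose _ _)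

end
end

section
/- Let A = aᵀ where a = (a₁, …, a_n) ∈ ℤⁿ_{>0} with gcd(a₁,…,a_n) = 1, and let δ > 0. If b ∈ ℤ satisfies b ≥ 2^{(n−1)/2−1}(1+δ) p(1,n) Σ_{i=1}^n ‖a[i]‖ a_i, where p(1,n) = ((n−1)n/2)^{1/2} and a[i] is a with its i-th coordinate deleted, then the knapsack polytope {x ∈ ℝⁿ_{≥0} : aᵀx = b} contains an integer point. -/
noncomputable section

open scoped BigOperators RealInnerProductSpace Pointwise

/-!
Rather than rounding against an LLL-reduced basis of the kernel lattice, we use the elementary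
Frobenius-type bound: from an integer solution `y` of `aᵀy = b` (Bézout), reducing every `yᵢ`,
`i ≠ k`, modulo `a_k` and pushing the carries into the `k`-th coordinate gives a nonnegative
solution as soon as `b ≥ (a_k - 1) ∑_{i ≠ k} a_i`. The paper's threshold dominates this, since
`‖a[i]‖ ≥ a_k` for every `i ≠ k`.
-/

open Finset

theorem exists_nonneg_sum_mul_eq_of_sum_mul_eq {ι : Type*} [Fintype ι] [DecidableEq ι]
    {a y : ι → ℤ} {b : ℤ} (hy : ∑ i, a i * y i = b) (ha : ∀ i, 0 ≤ a i) {k : ι}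
    (hk : 0 < a k)
    (hb : (a k - 1) * ∑ i ∈ univ.erase k, a i ≤ b) :
    ∃ x : ι → ℤ, (∀ i, 0 ≤ x i) ∧ ∑ i, a i * x i = b := by
  set x : ι → ℤ := Function.update (fun i => y i % a k) k
    (y k + ∑ i ∈ univ.erase k, a i * (y i / a k))
  have hxk : x k = y k + ∑ i ∈ univ.erase k, a i * (y i / a k) := Function.update_self ..
  have hx : ∀ i ∈ univ.erase k, x i = y i % a k := fun i hi =>
    Function.update_of_ne (ne_of_mem_erase hi) _ _
  have hsplit :
      ∀ z : ι → ℤ, ∑ i, a i * z i = a k * z k + ∑ i ∈ univ.erase k, a i * z i :=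
    fun z => (add_sum_erase _ _ (mem_univ k)).symm
  have hsum : ∑ i, a i * x i = b := by
    have hcarry : ∑ i ∈ univ.erase k, a i * y i =
        a k * ∑ i ∈ univ.erase k, a i * (y i / a k) + ∑ i ∈ univ.erase k, a i * x i := by
      rw [mul_sum, ← sum_add_distrib]
      refine sum_congr rfl fun i hi => ?_
      rw [hx i hi]
      linear_combination a i * (Int.emod_add_mul_ediv (y i) (a k)).symm
    rw [← hy, hsplit, hsplit y, hcarry, hxk]
    ring
  have hxk_nonneg : 0 ≤ a k * x k := by
    have : ∑ i ∈ univ.erase k, a i * x i ≤ (a k - 1) * ∑ i ∈ univ.erase k, a i := by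
      rw [mul_sum]
      refine sum_le_sum fun i hi => ?_
      rw [hx i hi, mul_comm]
      exact mul_le_mul_of_nonneg_right (by linarith [Int.emod_lt_of_pos (y i) hk]) (ha i)
    linarith [hsplit x]
  refine ⟨x, fun i => ?_, hsum⟩
  rcases eq_or_ne i k with rfl | hi
  · exact (mul_nonneg_iff_of_pos_left hk).mp hxk_nonneg
  · rw [hx i (mem_erase.mpr ⟨hi, mem_univ i⟩)]
    exact Int.emod_nonneg _ hk.ne'

theorem mul_sum_erase_le_sum_sqrt_sum_erase_sq_mul {ι : Type*} [Fintype ι] [DecidableEq ι]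
    {a : ι → ℝ} (ha : ∀ i, 0 ≤ a i) (k : ι) :
    a k * ∑ i ∈ univ.erase k, a i ≤ ∑ i, √(∑ j ∈ univ.erase i, a j ^ 2) * a i := by
  have hle : ∀ i ∈ univ.erase k, a k ≤ √(∑ j ∈ univ.erase i, a j ^ 2) := fun i hi =>
    Real.le_sqrt_of_sq_le <| single_le_sum (f := fun j => a j ^ 2) (fun j _ => sq_nonneg _) <|
      mem_erase.mpr ⟨(ne_of_mem_erase hi).symm, mem_univ k⟩
  calc a k * ∑ i ∈ univ.erase k, a i
      ≤ ∑ i ∈ univ.erase k, √(∑ j ∈ univ.erase i, a j ^ 2) * a i := by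
        rw [mul_sum]
        exact sum_le_sum fun i hi => mul_le_mul_of_nonneg_right (hle i hi) (ha i)
    _ ≤ ∑ i, √(∑ j ∈ univ.erase i, a j ^ 2) * a i :=
        sum_le_sum_of_subset_of_nonneg (subset_univ _) fun i _ _ =>
          mul_nonneg (Real.sqrt_nonneg _) (ha i)

theorem one_le_two_rpow_mul_mul_sqrt {n : ℕ} (hn : 3 ≤ n) {δ : ℝ} (hδ : 0 ≤ δ) :
    1 ≤ (2 : ℝ) ^ (((n : ℝ) - 1) / 2 - 1) * (1 + δ) * √(((n : ℝ) - 1) * n / 2) := by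
  have hn' : (3 : ℝ) ≤ n := by exact_mod_cast hn
  have hpow : 1 ≤ (2 : ℝ) ^ (((n : ℝ) - 1) / 2 - 1) :=
    Real.one_le_rpow (by norm_num) (by linarith)
  have hsqrt : 1 ≤ √(((n : ℝ) - 1) * n / 2) := Real.le_sqrt_of_sq_le (by nlinarith)
  calc (1 : ℝ) = 1 * 1 * 1 := by norm_num
    _ ≤ _ := by gcongr; linarith

theorem sum_sqrt_sum_erase_sq_mul_fin_two {a : Fin 2 → ℝ} (ha : ∀ i, 0 ≤ a i) :
    ∑ i, √(∑ j ∈ univ.erase i, a j ^ 2) * a i = 2 * (a 0 * a 1) := by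
  have h0 : (univ.erase (0 : Fin 2)) = {1} := by decide
  have h1 : (univ.erase (1 : Fin 2)) = {0} := by decide
  rw [Fin.sum_univ_two, h0, h1, sum_singleton, sum_singleton, Real.sqrt_sq (ha 0),
    Real.sqrt_sq (ha 1)]
  ring

theorem sub_one_mul_sum_erase_le {n : ℕ} {a : Fin n → ℝ} (ha : ∀ i, 0 ≤ a i) (k : Fin n)
    {δ : ℝ} (hδ : 0 ≤ δ) :
    (a k - 1) * ∑ i ∈ univ.erase k, a i ≤ (2 : ℝ) ^ (((n : ℝ) - 1) / 2 - 1) * (1 + δ) *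
      √(((n : ℝ) - 1) * n / 2) * ∑ i, √(∑ j ∈ univ.erase i, a j ^ 2) * a i := by
  have hS := mul_sum_erase_le_sum_sqrt_sum_erase_sq_mul ha k
  have hT : 0 ≤ ∑ i ∈ univ.erase k, a i := sum_nonneg fun i _ => ha i
  have hdrop : (a k - 1) * ∑ i ∈ univ.erase k, a i ≤ a k * ∑ i ∈ univ.erase k, a i := by
    nlinarith
  rcases le_or_gt 3 n with hn | hn
  · exact hdrop.trans <| hS.trans <|
      le_mul_of_one_le_left ((mul_nonneg (ha k) hT).trans hS)
        (one_le_two_rpow_mul_mul_sqrt hn hδ)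
  interval_cases n
  · exact k.elim0
  · simp [Subsingleton.elim k 0]
  · have hprod : a k * ∑ i ∈ univ.erase k, a i = a 0 * a 1 := by
      fin_cases k <;> simp [show univ.erase (0 : Fin 2) = {1} by decide,
        show univ.erase (1 : Fin 2) = {0} by decide, mul_comm]
    have hpow : (1 / 2 : ℝ) ≤ 2 ^ (((2 : ℕ) - 1 : ℝ) / 2 - 1) := by
      rw [one_div, ← Real.rpow_neg_one]
      exact Real.rpow_le_rpow_of_exponent_le (by norm_num) (by norm_num)
    have hsqrt : √(((2 : ℕ) - 1 : ℝ) * (2 : ℕ) / 2) = 1 := by norm_num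
    rw [sum_sqrt_sum_erase_sq_mul_fin_two ha, hsqrt]
    have h01 := mul_nonneg (ha 0) (ha 1)
    calc (a k - 1) * ∑ i ∈ univ.erase k, a i ≤ 1 / 2 * 1 * 1 * (2 * (a 0 * a 1)) := by
          linarith
      _ ≤ _ := by gcongr; linarith

/-- Theorem 4, condition (10): if
`b ≥ 2^{(n−1)/2−1}(1+δ) p(1,n) ∑ ‖a[i]‖ a_i`, the knapsack `{x ≥ 0 : aᵀx = b}` contains an
integer point. -/
theorem knapsack_m_one_feasible {n : ℕ} (a : Fin n → ℤ) (ha : ∀ i, 0 < a i)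
    (hgcd : Finset.univ.gcd a = 1) (δ : ℝ) (hδ : 0 < δ) (b : ℤ)
    (hb : (2 : ℝ) ^ (((n : ℝ) - 1) / 2 - 1) * (1 + δ) * Real.sqrt (((n : ℝ) - 1) * n / 2) *
        ∑ i, Real.sqrt (∑ j ∈ Finset.univ.erase i, (a j : ℝ) ^ 2) * (a i : ℝ) ≤ (b : ℝ)) :
    ∃ x : Fin n → ℤ, (∀ i, 0 ≤ x i) ∧ ∑ i, a i * x i = b := by
  obtain ⟨k⟩ : Nonempty (Fin n) := by
    rw [← Fin.pos_iff_nonempty, Nat.pos_iff_ne_zero]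
    rintro rfl
    simp at hgcd
  obtain ⟨y, hy⟩ := univ.gcd_eq_sum_mul a
  have hby : ∑ i, a i * (b * y i) = b := by
    simp_rw [mul_left_comm (a _) b, ← mul_sum, ← hy, hgcd, mul_one]
  refine exists_nonneg_sum_mul_eq_of_sum_mul_eq hby (fun i => (ha i).le) (ha k) ?_
  exact_mod_cast (sub_one_mul_sum_erase_le (fun i => by exact_mod_cast (ha i).le) k
    hδ.le).trans hb

end
end
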